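/- arXiv:0811.1763 — 7 statements merged into one kernel-verified Lean document; each statement's English description precedes it below -/
import Mathlib

section
/- Let X be a separable Banach space over ℝ that has the π-property but does not have a finite dimensional decomposition. Then there exists an increasing sequence (X_i)_{i=1}^∞ of finite-dimensional subspaces of X such that: (a) sup_i λ(X_i, X) < ∞; (b) the closure of ⋃_{i=1}^∞ X_i equals X; and (c) for every strictly increasing sequence of indices (i_n)_{n=1}^∞ and every sequence of linear projections P_n : X_{i_{n+1}} → X_{i_n} (linear maps whose restriction to X_{i_n} is the identity), sup_{k,l ∈ ℕ, k < l} ‖P_k P_{k+1} ⋯ P_{l-1} P_l‖ = ∞. -/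
open Filter Topology Metric Set

noncomputable section

/-- `X` has the π-property: there is a sequence of finite-rank continuous linear
projections converging strongly to the identity. -/
def HasPiProperty (X : Type*) [NormedAddCommGroup X] [NormedSpace ℝ X] : Prop :=
  ∃ T : ℕ → X →L[ℝ] X,
    (∀ n, (T n).comp (T n) = T n) ∧
    (∀ n, FiniteDimensional ℝ (LinearMap.range (T n : X →ₗ[ℝ] X))) ∧
    (∀ x : X, Tendsto (fun n => ‖x - T n x‖) atTop (𝓝 0))

/-- `X` has a finite dimensional decomposition: moreover the projections commute,
`T n ∘ T m = T (min m n)`. -/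
def HasFDDProperty (X : Type*) [NormedAddCommGroup X] [NormedSpace ℝ X] : Prop :=
  ∃ T : ℕ → X →L[ℝ] X,
    (∀ n, FiniteDimensional ℝ (LinearMap.range (T n : X →ₗ[ℝ] X))) ∧
    (∀ x : X, Tendsto (fun n => ‖x - T n x‖) atTop (𝓝 0)) ∧
    (∀ m n, (T n).comp (T m) = T (min m n))

/-- Relative projection constant of a subspace `Y` of `X`. -/
def relProjConst {X : Type*} [NormedAddCommGroup X] [NormedSpace ℝ X]
    (Y : Submodule ℝ X) : ℝ :=
  sInf {c : ℝ | ∃ P : X →L[ℝ] X, P.comp P = P ∧ LinearMap.range (P : X →ₗ[ℝ] X) = Y ∧ ‖P‖ = c}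

/-- Composition `P k ∘ P (k+1) ∘ ⋯ ∘ P (k+j)` of the projections
`P n : W (n+1) → W n`, as a map `W (k+j+1) → W k`. -/
def projChain {X : Type*} [NormedAddCommGroup X] [NormedSpace ℝ X]
    {W : ℕ → Submodule ℝ X} (P : (n : ℕ) → (W (n+1) →L[ℝ] W n)) :
    (k j : ℕ) → (W (k + j + 1) →L[ℝ] W k)
  | k, 0 => P k
  | k, j+1 => (projChain P k j).comp (P (k + j + 1))

/-- Condition (c): for every subsequence and every sequence of projections between
consecutive subspaces of the subsequence, the norms of the compositions
`P k ∘ ⋯ ∘ P l` (with `k < l`) are unbounded. -/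
def ChainCondition {X : Type*} [NormedAddCommGroup X] [NormedSpace ℝ X]
    (V : ℕ → Submodule ℝ X) : Prop :=
  ∀ idx : ℕ → ℕ, StrictMono idx →
    ∀ P : (n : ℕ) → ((V (idx (n+1)) : Submodule ℝ X) →L[ℝ] V (idx n)),
      (∀ (n : ℕ) (x : X) (hx : x ∈ V (idx n)) (hx' : x ∈ V (idx (n+1))),
        ((P n ⟨x, hx'⟩ : V (idx n)) : X) = x) →
      ∀ C : ℝ, ∃ k j : ℕ, C < ‖projChain (W := fun n => V (idx n)) P k (j + 1)‖

end

/-!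
By Banach–Steinhaus the projections `T n` of the π-property are bounded by some `M`. If `R` is a
projection onto a finite-dimensional `E`, then `‖(1 - T n) R‖ → 0`, and for large `n` the
conjugate `u⁻¹ (T n) u` with `u = 1 - (1 - T n) R` is a projection of norm at most `3 M` whose
range contains `E`. Enlarging such ranges along a dense sequence gives the increasing, uniformly
complemented `X i` with dense union.

If for some subsequence and projections `P n` the chains `P k ⋯ P l` stayed bounded, compose
them with bounded projections of `X` onto the `X i` and take pointwise limits of the chains along
an ultrafilter; this is possible because bounded sets of operators into a finite-dimensional
space are pointwise compact. The limits `S k` are uniformly bounded projections onto the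
subspaces of the subsequence with `S k S (k + 1) = S k`, i.e. a finite dimensional decomposition.
-/

section

open ContinuousLinearMap

section prodIco

variable {M : Type*} [Monoid M]

/-- `prodIco p m l = p m * p (m + 1) * ⋯ * p (l - 1)`, which is `1` when `l ≤ m`. -/
def prodIco (p : ℕ → M) (m l : ℕ) : M :=
  ((List.range' m (l - m)).map p).prod

theorem prodIco_eq_mul_prodIco (p : ℕ → M) {m l : ℕ} (h : m < l) :
    prodIco p m l = p m * prodIco p (m + 1) l := by
  obtain ⟨k, rfl⟩ := Nat.exists_eq_add_of_lt h
  simp [prodIco, show m + k + 1 - m = k + 1 by omega, show m + k + 1 - (m + 1) = k by omega,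
    List.range'_succ]

theorem prodIco_succ_right (p : ℕ → M) {m l : ℕ} (h : m ≤ l) :
    prodIco p m (l + 1) = prodIco p m l * p l := by
  obtain ⟨k, rfl⟩ := Nat.exists_eq_add_of_le h
  simp [prodIco, show m + k + 1 - m = k + 1 by omega, List.range'_concat]

end prodIco

section

variable {𝕜 E F : Type*} [NontriviallyNormedField 𝕜] [NormedAddCommGroup E] [NormedSpace 𝕜 E]
  [NormedAddCommGroup F] [NormedSpace 𝕜 F]

theorem ContinuousLinearMap.prodIco_apply_eq_self {p : ℕ → E →L[𝕜] E} {m : ℕ} {x : E}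
    (h : ∀ k ≥ m, p k x = x) (l : ℕ) : prodIco p m l x = x := by
  suffices ∀ L : List ℕ, (∀ k ∈ L, m ≤ k) → (L.map p).prod x = x from
    this _ fun k hk => (List.mem_range'_1.1 hk).1
  intro L hL
  induction L with
  | nil => rfl
  | cons k L ih =>
    simp only [List.map_cons, List.prod_cons, List.forall_mem_cons] at hL ⊢
    rw [mul_apply_eq_comp, ih hL.2, h k hL.1]

theorem Submodule.norm_subtypeL_comp (K : Submodule 𝕜 F) (f : E →L[𝕜] K) :
    ‖K.subtypeL ∘L f‖ = ‖f‖ :=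
  K.subtypeₗᵢ.norm_toContinuousLinearMap_comp

theorem ContinuousLinearMap.norm_codRestrict (f : E →L[𝕜] F) (K : Submodule 𝕜 F)
    (h : ∀ x, f x ∈ K) : ‖f.codRestrict K h‖ = ‖f‖ :=
  (K.norm_subtypeL_comp _).symm

theorem ContinuousLinearMap.exists_tendsto_ultrafilter_of_norm_le [ProperSpace F] {ι : Type*}
    (U : Ultrafilter ι) (A : ι → E →L[𝕜] F) {C : ℝ} (hA : ∀ᶠ i in U, ‖A i‖ ≤ C) :
    ∃ S : E →L[𝕜] F, ‖S‖ ≤ C ∧ ∀ x, Tendsto (fun i => A i x) U (𝓝 (S x)) := by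
  have hmem : ∀ᶠ i in U, ⇑(A i) ∈ (⇑) '' closedBall (0 : E →L[𝕜] F) C :=
    hA.mono fun i hi => ⟨A i, mem_closedBall_zero_iff.2 hi, rfl⟩
  obtain ⟨_, ⟨S, hS, rfl⟩, hlim⟩ := (isCompact_image_coe_closedBall 0 C).ultrafilter_le_nhds
    (U.map fun i => ⇑(A i)) (le_principal_iff.2 hmem)
  exact ⟨S, mem_closedBall_zero_iff.1 hS, tendsto_pi_nhds.1 hlim⟩

theorem ContinuousLinearMap.tendsto_zero_of_tendsto_apply [CompleteSpace 𝕜]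
    [FiniteDimensional 𝕜 E] {ι : Type*} {l : Filter ι} {A : ι → E →L[𝕜] F}
    (hA : ∀ x, Tendsto (fun i => A i x) l (𝓝 0)) :
    Tendsto A l (𝓝 0) := by
  let b := Module.finBasis 𝕜 E
  obtain ⟨C, hC, hle⟩ := b.exists_opNorm_le (F := F)
  rw [Metric.tendsto_nhds]
  intro ε hε
  have hδ : 0 < ε / (2 * C) := by positivity
  have hsmall : ∀ᶠ i in l, ∀ j, ‖A i (b j)‖ ≤ ε / (2 * C) :=
    eventually_all.2 fun j => (hA (b j)).norm.eventually (eventually_le_nhds (by simpa using hδ))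
  filter_upwards [hsmall] with i hi
  calc dist (A i) 0 = ‖A i‖ := dist_zero_right _
    _ ≤ C * (ε / (2 * C)) := hle hδ.le hi
    _ = ε / 2 := by field_simp
    _ < ε := half_lt_self hε

theorem ContinuousLinearMap.tendsto_apply_of_norm_le_of_dense {ι : Type*} {l : Filter ι}
    {A : ι → E →L[𝕜] F} {C : ℝ} (hA : ∀ i, ‖A i‖ ≤ C) (L : E →L[𝕜] F) {s : Set E}
    (hs : Dense s) (h : ∀ x ∈ s, Tendsto (fun i => A i x) l (𝓝 (L x))) (x : E) :
    Tendsto (fun i => A i x) l (𝓝 (L x)) := by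
  have hequi : Equicontinuous ((⇑) ∘ A) := by
    have := (NormedSpace.equicontinuous_TFAE A).out 1 5
    exact this.2 ⟨C, hA⟩
  exact (hequi.isClosed_setOfPred_tendsto L.continuous).closure_subset_iff.2 h
    (hs.closure_eq.symm ▸ mem_univ x)

end

variable {X : Type*} [NormedAddCommGroup X] [NormedSpace ℝ X]

def IsComplementedWithBound (C : ℝ) (F : Submodule ℝ X) : Prop :=
  ∃ P : X →L[ℝ] X, P.comp P = P ∧ LinearMap.range (P : X →ₗ[ℝ] X) = F ∧ ‖P‖ ≤ C

theorem relProjConst_le {C : ℝ} {F : Submodule ℝ X} (hF : IsComplementedWithBound C F) :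
    relProjConst F ≤ C := by
  unfold relProjConst
  obtain ⟨P, hP, hPF, hPC⟩ := hF
  refine (csInf_le ?_ ?_).trans hPC
  · exact ⟨0, by rintro _ ⟨Q, -, -, rfl⟩; exact norm_nonneg Q⟩
  · exact ⟨P, hP, hPF, rfl⟩

theorem exists_idempotent_of_norm_one_sub_mul_le [CompleteSpace X] {A R : X →L[ℝ] X}
    (hA : A * A = A) [FiniteDimensional ℝ (LinearMap.range (A : X →ₗ[ℝ] X))] {E : Submodule ℝ X}
    (hR : ∀ x ∈ E, R x = x) (hAR : ‖(1 - A) * R‖ ≤ 1 / 2) :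
    ∃ S : X →L[ℝ] X, S * S = S ∧ FiniteDimensional ℝ (LinearMap.range (S : X →ₗ[ℝ] X)) ∧
      E ≤ LinearMap.range (S : X →ₗ[ℝ] X) ∧ ‖S‖ ≤ 3 * ‖A‖ := by
  have ht : ‖(1 - A) * R‖ < 1 := hAR.trans_lt (by norm_num)
  set u := Units.oneSub _ ht
  set v : X →L[ℝ] X := ↑u
  set w : X →L[ℝ] X := ↑u⁻¹
  have hone : ‖(1 : X →L[ℝ] X)‖ ≤ 1 := norm_id_le
  have hv : ‖v‖ ≤ 3 / 2 := (norm_sub_le _ _).trans (by linarith)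
  have hw : ‖w‖ ≤ 2 := by
    refine (tsum_geometric_le_of_norm_lt_one _ ht).trans ?_
    have : (1 - ‖(1 - A) * R‖)⁻¹ ≤ 2 := by
      rw [inv_le_comm₀ (by linarith) (by norm_num)]
      linarith
    linarith
  -- `v = 1 - (1 - A) R` agrees with `A` on `E`, so the conjugate `w A v` fixes `E`.
  have hvE : ∀ x ∈ E, v x = A x := by
    intro x hx
    simp [v, u, hR x hx]
  have hwv : ∀ x, w (v x) = x := fun x => DFunLike.congr_fun u.inv_mul x
  refine ⟨w * A * v, ?_, ?_, fun x hx => ⟨x, ?_⟩, ?_⟩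
  · simp only [w, v, mul_assoc, Units.mul_inv_cancel_left]
    rw [← mul_assoc A, hA]
  · have : LinearMap.range ((w * A * v : X →L[ℝ] X) : X →ₗ[ℝ] X) ≤
        (LinearMap.range (A : X →ₗ[ℝ] X)).map (w : X →ₗ[ℝ] X) := by
      rintro _ ⟨y, rfl⟩
      exact ⟨A (v y), LinearMap.mem_range_self _ _, rfl⟩
    exact Submodule.finiteDimensional_of_le this
  · change w (A (v x)) = x
    have hAx : A (A x) = A x := DFunLike.congr_fun hA x
    rw [hvE x hx, hAx, ← hvE x hx, hwv]
  · calc ‖w * A * v‖ ≤ ‖w‖ * ‖A‖ * ‖v‖ :=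
          (norm_mul_le _ _).trans (mul_le_mul_of_nonneg_right (norm_mul_le _ _) (norm_nonneg _))
      _ ≤ 2 * ‖A‖ * (3 / 2) := by gcongr
      _ = 3 * ‖A‖ := by ring

theorem HasPiProperty.exists_isComplementedWithBound_ge [CompleteSpace X]
    (hpi : HasPiProperty X) :
    ∃ C : ℝ, ∀ E : Submodule ℝ X, FiniteDimensional ℝ E →
      ∃ F, IsComplementedWithBound C F ∧ FiniteDimensional ℝ F ∧ E ≤ F := by
  obtain ⟨T, hT_idem, hT_fin, hT_lim⟩ := hpi
  have hT_lim' : ∀ x, Tendsto (fun n => (1 - T n) x) atTop (𝓝 0) := fun x =>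
    tendsto_zero_iff_norm_tendsto_zero.2 (hT_lim x)
  obtain ⟨M, hM⟩ : ∃ M, ∀ n, ‖T n‖ ≤ M := by
    refine banach_steinhaus fun x => ?_
    obtain ⟨B, hB⟩ := ((tendsto_const_nhds (x := x)).sub (hT_lim' x)).norm.bddAbove_range
    exact ⟨B, fun n => by simpa using hB ⟨n, rfl⟩⟩
  refine ⟨3 * M, fun E hE => ?_⟩
  obtain ⟨r, hr⟩ := Submodule.ClosedComplemented.of_finiteDimensional E
  have hsmall : Tendsto (fun n => (1 - T n) * (E.subtypeL ∘L r)) atTop (𝓝 0) := by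
    have h := tendsto_zero_of_tendsto_apply (l := atTop) (A := fun n => (1 - T n) ∘L E.subtypeL)
      fun x => by simpa using hT_lim' x
    have hcomp : Continuous fun B : E →L[ℝ] X => B ∘L r := continuous_id.clm_comp continuous_const
    have := (hcomp.tendsto 0).comp h
    rw [zero_comp] at this
    exact this.congr fun n => comp_assoc _ _ _
  obtain ⟨n, hn⟩ := (hsmall.eventually (closedBall_mem_nhds 0 one_half_pos)).exists
  have := hT_fin n
  obtain ⟨S, hS_idem, hS_fin, hES, hS_norm⟩ := exists_idempotent_of_norm_one_sub_mul_le (hT_idem n)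
    (E := E) (fun x hx => congrArg Subtype.val (hr ⟨x, hx⟩)) (mem_closedBall_zero_iff.1 hn)
  exact ⟨_, ⟨S, hS_idem, rfl, hS_norm.trans (by linarith [hM n])⟩, hS_fin, hES⟩

theorem exists_monotone_dense_of_forall_le {K V : Type*} [DivisionRing K] [AddCommGroup V]
    [Module K V] [TopologicalSpace V] [TopologicalSpace.SeparableSpace V]
    {p : Submodule K V → Prop}
    (h : ∀ E : Submodule K V, FiniteDimensional K E → ∃ F, p F ∧ FiniteDimensional K F ∧ E ≤ F) :
    ∃ W : ℕ → Submodule K V, Monotone W ∧ (∀ n, p (W n) ∧ FiniteDimensional K (W n)) ∧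
      Dense (⋃ n, (W n : Set V)) := by
  choose F hpF hF_fin hF_le using h
  obtain ⟨u, hu⟩ := TopologicalSpace.exists_dense_seq V
  -- `W (n + 1)` is chosen to contain `W n` and `u n`.
  let W : ℕ → {E : Submodule K V // FiniteDimensional K E} := fun n =>
    Nat.rec ⟨F ⊥ inferInstance, hF_fin _ _⟩
      (fun n E => ⟨F (E.1 ⊔ Submodule.span K {u n}) (have := E.2; inferInstance), hF_fin _ _⟩) n
  refine ⟨fun n => (W n).1, monotone_nat_of_le_succ fun n => le_sup_left.trans (hF_le _ _),
    fun n => ⟨?_, (W n).2⟩, hu.mono ?_⟩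
  · cases n <;> exact hpF _ _
  · rintro _ ⟨n, rfl⟩
    exact mem_iUnion.2 ⟨n + 1, hF_le _ _ (le_sup_right (a := (W n).1)
      (Submodule.mem_span_singleton_self (u n)))⟩

theorem exists_projections_of_norm_prodIco_le {W : ℕ → Submodule ℝ X} (hW : Monotone W)
    [∀ n, FiniteDimensional ℝ (W n)] {p : ℕ → X →L[ℝ] X} (hp_mem : ∀ n x, p n x ∈ W n)
    (hp_fix : ∀ n, ∀ x ∈ W n, p n x = x) {C : ℝ}
    (hC : ∀ m l, m + 2 ≤ l → ‖prodIco p m l‖ ≤ C) :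
    ∃ S : ℕ → X →L[ℝ] X, (∀ m x, S m x ∈ W m) ∧ (∀ m, ∀ x ∈ W m, S m x = x) ∧
      (∀ m, S m * S (m + 1) = S m) ∧ ∀ m, ‖S m‖ ≤ C := by
  -- Taking all limits along one ultrafilter is what makes them compatible, `S m = p m ∘ S (m + 1)`.
  let U := Ultrafilter.of (atTop : Filter ℕ)
  have hU : (U : Filter ℕ) ≤ atTop := Ultrafilter.of_le _
  have hlim : ∀ m, ∃ S : X →L[ℝ] X, (∀ x, S x ∈ W m) ∧ ‖S‖ ≤ C ∧
      ∀ x, Tendsto (fun l => prodIco p m l x) U (𝓝 (S x)) := by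
    intro m
    have hbound : ∀ᶠ l in U, ‖(p m ∘L prodIco p (m + 1) l).codRestrict (W m)
        (fun x => hp_mem m _)‖ ≤ C := by
      filter_upwards [hU (eventually_ge_atTop (m + 2))] with l hl
      calc _ = ‖p m ∘L prodIco p (m + 1) l‖ := norm_codRestrict _ _ _
        _ = ‖prodIco p m l‖ := by rw [prodIco_eq_mul_prodIco p (show m < l by omega)]; rfl
        _ ≤ C := hC m l hl
    obtain ⟨S, hSC, hS⟩ := exists_tendsto_ultrafilter_of_norm_le U _ hbound
    refine ⟨(W m).subtypeL ∘L S, fun x => (S x).2, ?_, fun x => ?_⟩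
    · rwa [Submodule.norm_subtypeL_comp]
    · refine ((continuous_subtype_val.tendsto _).comp (hS x)).congr' ?_
      filter_upwards [hU (eventually_gt_atTop m)] with l hl
      rw [prodIco_eq_mul_prodIco p hl]
      rfl
  choose S hS_mem hS_norm hS_lim using hlim
  have hfix : ∀ m, ∀ x ∈ W m, S m x = x := fun m x hx =>
    tendsto_nhds_unique (hS_lim m x) <| by
      simp [prodIco_apply_eq_self fun k hk => hp_fix k x (hW hk hx)]
  have hrec : ∀ m x, S m x = p m (S (m + 1) x) := by
    intro m x
    refine tendsto_nhds_unique (hS_lim m x)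
      ((((p m).continuous.tendsto _).comp (hS_lim (m + 1) x)).congr' ?_)
    filter_upwards [hU (eventually_gt_atTop m)] with l hl
    rw [prodIco_eq_mul_prodIco p hl]
    rfl
  refine ⟨S, hS_mem, hfix, fun m => ?_, hS_norm⟩
  ext x
  rw [mul_apply_eq_comp, hrec m, hfix _ _ (hS_mem _ x), ← hrec]

theorem hasFDDProperty_of_compatible_projections {W : ℕ → Submodule ℝ X} (hW : Monotone W)
    [∀ n, FiniteDimensional ℝ (W n)] (hdense : Dense (⋃ n, (W n : Set X)))
    {S : ℕ → X →L[ℝ] X} (hS_mem : ∀ m x, S m x ∈ W m) (hS_fix : ∀ m, ∀ x ∈ W m, S m x = x)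
    (hS_mul : ∀ m, S m * S (m + 1) = S m) {C : ℝ} (hS_norm : ∀ m, ‖S m‖ ≤ C) :
    HasFDDProperty X := by
  have hS_mul_add : ∀ m j, S m * S (m + j) = S m := by
    intro m j
    induction j with
    | zero => ext x; exact hS_fix m _ (hS_mem m x)
    | succ j ih =>
      nth_rw 1 [← ih]
      rw [mul_assoc, ← add_assoc, hS_mul, ih]
  refine ⟨S, fun m => ?_, fun x => ?_, fun m n => ?_⟩
  · have : LinearMap.range (S m : X →ₗ[ℝ] X) ≤ W m := by
      rintro _ ⟨x, rfl⟩
      exact hS_mem m x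
    exact Submodule.finiteDimensional_of_le this
  · have hlim : Tendsto (fun n => S n x) atTop (𝓝 x) := by
      refine tendsto_apply_of_norm_le_of_dense hS_norm (1 : X →L[ℝ] X) hdense (fun y hy => ?_) x
      obtain ⟨i, hi⟩ := mem_iUnion.1 hy
      exact tendsto_const_nhds.congr' <| (eventually_ge_atTop i).mono fun n hn =>
        (hS_fix n y (hW hn hi)).symm
    simpa [norm_sub_rev x] using tendsto_iff_norm_sub_tendsto_zero.1 hlim
  · rcases le_total n m with h | h
    · obtain ⟨j, rfl⟩ := Nat.exists_eq_add_of_le h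
      rw [min_eq_right h]
      exact hS_mul_add n j
    · ext x
      rw [min_eq_left h]
      exact hS_fix n _ (hW h (hS_mem m x))

theorem prodIco_eq_subtypeL_comp_projChain {W : ℕ → Submodule ℝ X}
    (P : (n : ℕ) → (W (n + 1) →L[ℝ] W n)) (Q : (n : ℕ) → (X →L[ℝ] W n))
    (hQ : ∀ n (x : W n), Q n x = x) (k j : ℕ) :
    prodIco (fun n => (W n).subtypeL ∘L P n ∘L Q (n + 1)) k (k + j + 1) =
      (W k).subtypeL ∘L projChain P k j ∘L Q (k + j + 1) := by
  induction j with
  | zero => simp [prodIco, projChain]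
  | succ j ih =>
    refine (prodIco_succ_right _ (show k ≤ k + j + 1 by omega)).trans ?_
    rw [ih]
    ext x
    simp [projChain, hQ]
    rfl

theorem norm_prodIco_le {W : ℕ → Submodule ℝ X} (P : (n : ℕ) → (W (n + 1) →L[ℝ] W n))
    (Q : (n : ℕ) → (X →L[ℝ] W n)) (hQ : ∀ n (x : W n), Q n x = x) {C C' : ℝ}
    (hP : ∀ k j, ‖projChain P k (j + 1)‖ ≤ C') (hQC : ∀ n, ‖Q n‖ ≤ C) {m l : ℕ}
    (hl : m + 2 ≤ l) :
    ‖prodIco (fun n => (W n).subtypeL ∘L P n ∘L Q (n + 1)) m l‖ ≤ C' * C := by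
  obtain ⟨j, rfl⟩ : ∃ j, l = m + (j + 1) + 1 := ⟨l - m - 2, by omega⟩
  rw [prodIco_eq_subtypeL_comp_projChain P Q hQ, Submodule.norm_subtypeL_comp]
  exact (opNorm_comp_le _ _).trans <| mul_le_mul (hP m j) (hQC _) (norm_nonneg _)
    ((opNorm_nonneg _).trans (hP 0 0))

theorem chainCondition_of_not_hasFDDProperty (hfdd : ¬ HasFDDProperty X)
    {V : ℕ → Submodule ℝ X} (hV : Monotone V) [∀ i, FiniteDimensional ℝ (V i)]
    (hdense : Dense (⋃ i, (V i : Set X))) {C : ℝ} (hC : ∀ i, IsComplementedWithBound C (V i)) :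
    ChainCondition V := by
  intro idx hidx P hP
  by_contra! hbdd
  obtain ⟨C', hC'⟩ := hbdd
  apply hfdd
  choose Q hQ_idem hQ_range hQ_norm using hC
  have hQ_mem : ∀ i x, Q i x ∈ V i := fun i x => hQ_range i ▸ LinearMap.mem_range_self _ x
  have hQ_fix : ∀ i, ∀ x ∈ V i, Q i x = x := by
    intro i x hx
    obtain ⟨y, rfl⟩ := hQ_range i ▸ hx
    exact DFunLike.congr_fun (hQ_idem i) y
  let Q' : (n : ℕ) → (X →L[ℝ] V (idx n)) := fun n => (Q (idx n)).codRestrict _ (hQ_mem _)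
  have hQ' : ∀ n (x : V (idx n)), Q' n x = x := fun n x => Subtype.ext (hQ_fix _ x x.2)
  have hW : Monotone fun n => V (idx n) := hV.comp hidx.monotone
  have hp_fix : ∀ n, ∀ x ∈ V (idx n), ((V (idx n)).subtypeL ∘L P n ∘L Q' (n + 1)) x = x := by
    intro n x hx
    have hx' := hW n.le_succ hx
    exact (congrArg (fun y => ((P n y : V (idx n)) : X)) (hQ' (n + 1) ⟨x, hx'⟩)).trans
      (hP n x hx hx')
  obtain ⟨S, hS_mem, hS_fix, hS_mul, hS_norm⟩ := exists_projections_of_norm_prodIco_le hW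
    (fun n x => (P n _).2) hp_fix fun m l hl => norm_prodIco_le (W := fun n => V (idx n)) P Q' hQ'
      hC' (fun n => (norm_codRestrict _ _ _).trans_le (hQ_norm _)) hl
  refine hasFDDProperty_of_compatible_projections hW (hdense.mono ?_) hS_mem hS_fix hS_mul hS_norm
  exact iUnion_subset fun i x hx => mem_iUnion.2 ⟨i, hV (hidx.id_le i) hx⟩

end

theorem exists_subspaces_of_pi_property_without_FDD
    (X : Type*) [NormedAddCommGroup X] [NormedSpace ℝ X]
    [CompleteSpace X] [TopologicalSpace.SeparableSpace X]
    (hpi : HasPiProperty X) (hfdd : ¬ HasFDDProperty X) :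
    ∃ V : ℕ → Submodule ℝ X,
      Monotone V ∧ (∀ i, FiniteDimensional ℝ (V i)) ∧
      -- (a) sup_i λ(X_i, X) < ∞
      ((∀ i, ∃ P : X →L[ℝ] X, P.comp P = P ∧ LinearMap.range (P : X →ₗ[ℝ] X) = V i) ∧
        ∃ C : ℝ, ∀ i, relProjConst (V i) ≤ C) ∧
      -- (b) the union of the subspaces is dense in X
      closure (⋃ i, (V i : Set X)) = Set.univ ∧
      -- (c) compositions of projections along any subsequence are unbounded
      ChainCondition V := by
  obtain ⟨C, hC⟩ := hpi.exists_isComplementedWithBound_ge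
  obtain ⟨V, hV, hVC, hdense⟩ := exists_monotone_dense_of_forall_le hC
  have hV_fin : ∀ i, FiniteDimensional ℝ (V i) := fun i => (hVC i).2
  refine ⟨V, hV, hV_fin, ⟨fun i => ?_, C, fun i => relProjConst_le (hVC i).1⟩,
    hdense.closure_eq, chainCondition_of_not_hasFDDProperty hfdd hV hdense fun i => (hVC i).1⟩
  exact (hVC i).1.imp fun P hP => ⟨hP.1, hP.2.1⟩
end

section
/- Let X be a separable Banach space over ℝ containing an increasing sequence (X_i)_{i=1}^∞ of finite-dimensional subspaces satisfying: (a) sup_i λ(X_i, X) < ∞; (b) the closure of ⋃_{i=1}^∞ X_i equals X; and (c) for every strictly increasing sequence of indices (i_n)_{n=1}^∞ and every sequence of linear projections P_n : X_{i_{n+1}} → X_{i_n} (linear maps whose restriction to X_{i_n} is the identity), sup_{k,l ∈ ℕ, k < l} ‖P_k P_{k+1} ⋯ P_{l-1} P_l‖ = ∞. Then X has the π-property but does not have a finite dimensional decomposition. -/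
open Filter Topology Metric Set

/-!
Projections `π n` onto `V n` of uniformly bounded norm converge strongly to the identity by
density, which is the π-property. Suppose `S n` were an FDD; it is bounded by Banach–Steinhaus.
As `S m → 1` and `π n → 1` uniformly on finite-dimensional subspaces, small similarity
perturbations turn `S m` into idempotents fixing `V j` with range in a later `V j'`. Iterating
gives idempotents `Q n` within `θ ^ n` of `S (m n)` that fix `V (j n)` and map into
`V (j (n + 1))`. Since `S a * S b = S a` for `a ≤ b`, the products `Q k * ⋯ * Q (k + l)` stay close
to `S (m k)`, hence bounded. With bounded projections `ρ n` onto `V (j (n + 1))` satisfying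
`Q n * ρ n = Q n`, the maps `ρ n * Q (n + 1)` are projections `V (j (n + 2)) → V (j (n + 1))` whose
compositions are bounded, contradicting (c).
-/

section Perturbation

variable {𝕜 E : Type*} [NontriviallyNormedField 𝕜] [NormedAddCommGroup E] [NormedSpace 𝕜 E]
  [CompleteSpace E]

theorem exists_unit_eq_one_add_of_norm_le_half {D : E →L[𝕜] E} (hD : ‖D‖ ≤ 1 / 2) :
    ∃ u : (E →L[𝕜] E)ˣ, (u : E →L[𝕜] E) = 1 + D ∧ ‖(↑u⁻¹ : E →L[𝕜] E)‖ ≤ 2 ∧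
      ‖(↑u⁻¹ : E →L[𝕜] E) - 1‖ ≤ 2 * ‖D‖ := by
  have hD' : ‖-D‖ < 1 := by rw [norm_neg]; linarith
  set u := Units.oneSub (-D) hD'
  have hu : (u : E →L[𝕜] E) = 1 + D := by rw [Units.val_oneSub, sub_neg_eq_add]
  have h : (↑u⁻¹ : E →L[𝕜] E) + ↑u⁻¹ * D = 1 := by
    rw [← Units.inv_mul u, hu, mul_add, mul_one]
  have hinv : (↑u⁻¹ : E →L[𝕜] E) - 1 = -(↑u⁻¹ * D) := by rw [← h]; abel
  have hinv_norm : ‖(↑u⁻¹ : E →L[𝕜] E)‖ ≤ 2 := by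
    have : ‖(↑u⁻¹ : E →L[𝕜] E)‖ ≤ 1 + ‖(↑u⁻¹ : E →L[𝕜] E)‖ * (1 / 2) :=
      calc ‖(↑u⁻¹ : E →L[𝕜] E)‖ = ‖(1 : E →L[𝕜] E) - ↑u⁻¹ * D‖ := by rw [← h, add_sub_cancel_right]
        _ ≤ ‖(1 : E →L[𝕜] E)‖ + ‖(↑u⁻¹ : E →L[𝕜] E) * D‖ := norm_sub_le _ _
        _ ≤ 1 + ‖(↑u⁻¹ : E →L[𝕜] E)‖ * (1 / 2) := by
            gcongr
            · exact ContinuousLinearMap.norm_id_le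
            · exact (norm_mul_le _ _).trans (by gcongr)
    linarith
  refine ⟨u, hu, hinv_norm, ?_⟩
  rw [hinv, norm_neg]
  exact (norm_mul_le _ _).trans (by gcongr)

/-- `Q` is the conjugate `u⁻¹ * P * u = u⁻¹ * P` of `P` by `u = 1 + (P - 1) * G`. -/
theorem exists_idempotent_near_fixing {P : E →L[𝕜] E} (hP : P * P = P) (G : E →L[𝕜] E)
    (hPG : ‖(P - 1) * G‖ ≤ 1 / 2) [FiniteDimensional 𝕜 (LinearMap.range (P : E →ₗ[𝕜] E))] :
    ∃ Q : E →L[𝕜] E, Q * Q = Q ∧ (∀ v, G v = v → Q v = v) ∧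
      FiniteDimensional 𝕜 (LinearMap.range (Q : E →ₗ[𝕜] E)) ∧
      ‖Q - P‖ ≤ 2 * ‖(P - 1) * G‖ * ‖P‖ := by
  obtain ⟨u, hu, -, hu_inv⟩ := exists_unit_eq_one_add_of_norm_le_half hPG
  have hPu : P * ↑u = P := by
    rw [hu, mul_add, mul_one, ← mul_assoc, mul_sub, hP, mul_one, sub_self, zero_mul, add_zero]
  have hPu_inv : P * ↑u⁻¹ = P := by rw [← hPu, mul_assoc, Units.mul_inv, mul_one, hPu]
  refine ⟨↑u⁻¹ * P, ?_, fun v hv => ?_, ?_, ?_⟩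
  · rw [mul_assoc, ← mul_assoc P, hPu_inv, hP]
  · have huv : (u : E →L[𝕜] E) v = P v := by
      simp only [hu, add_apply, mul_apply_eq_comp, hv,
        sub_apply, one_apply_eq_self, add_sub_cancel]
    rw [mul_apply_eq_comp, ← huv, ← mul_apply_eq_comp, Units.inv_mul,
      one_apply_eq_self]
  · rw [ContinuousLinearMap.toLinearMap_mul, Module.End.mul_eq_comp, LinearMap.range_comp]
    infer_instance
  · calc ‖↑u⁻¹ * P - P‖ = ‖((↑u⁻¹ : E →L[𝕜] E) - 1) * P‖ := by rw [sub_mul, one_mul]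
      _ ≤ 2 * ‖(P - 1) * G‖ * ‖P‖ := (norm_mul_le _ _).trans (by gcongr)

/-- `Q` is the conjugate `u * P * u⁻¹ = R * P * u⁻¹` of `P` by `u = 1 + (R - 1) * P`. -/
theorem exists_idempotent_near_range_le {P : E →L[𝕜] E} (hP : P * P = P) (R : E →L[𝕜] E)
    (hRP : ‖(R - 1) * P‖ ≤ 1 / 2) :
    ∃ Q : E →L[𝕜] E, Q * Q = Q ∧ (∀ v, P v = v → R v = v → Q v = v) ∧
      LinearMap.range (Q : E →ₗ[𝕜] E) ≤ LinearMap.range (R : E →ₗ[𝕜] E) ∧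
      ‖Q - P‖ ≤ 2 * (1 + ‖P‖) * ‖(R - 1) * P‖ := by
  obtain ⟨u, hu, hu_inv, -⟩ := exists_unit_eq_one_add_of_norm_le_half hRP
  have huP : ↑u * P = R * P := by rw [hu, add_mul, one_mul, mul_assoc, hP, sub_mul, one_mul,
    add_sub_cancel]
  have hu_invRP : ↑u⁻¹ * (R * P) = P := by rw [← huP, ← mul_assoc, Units.inv_mul, one_mul]
  refine ⟨R * P * ↑u⁻¹, ?_, fun v hPv hRv => ?_, ?_, ?_⟩
  · calc R * P * ↑u⁻¹ * (R * P * ↑u⁻¹) = R * (P * (↑u⁻¹ * (R * P))) * ↑u⁻¹ := by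
          simp only [mul_assoc]
      _ = R * P * ↑u⁻¹ := by rw [hu_invRP, hP]
  · have huv : (u : E →L[𝕜] E) v = v := by
      simp only [hu, add_apply, mul_apply_eq_comp, hPv, hRv,
        sub_apply, one_apply_eq_self, sub_self, add_zero]
    have hu_invv : (↑u⁻¹ : E →L[𝕜] E) v = v := by
      conv_lhs => rw [← huv]
      rw [← mul_apply_eq_comp, Units.inv_mul, one_apply_eq_self]
    simp only [mul_apply_eq_comp, hu_invv, hPv, hRv]
  · rintro _ ⟨x, rfl⟩
    exact ⟨P ((↑u⁻¹ : E →L[𝕜] E) x), rfl⟩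
  · have h : R * P * ↑u⁻¹ - P = (1 - P) * ((R - 1) * P) * ↑u⁻¹ := by
      calc R * P * ↑u⁻¹ - P = (R * P - P * ↑u) * ↑u⁻¹ := by
            rw [sub_mul, mul_assoc P, Units.mul_inv, mul_one]
        _ = (1 - P) * ((R - 1) * P) * ↑u⁻¹ := by
            rw [hu]; noncomm_ring
    have h1P : ‖(1 : E →L[𝕜] E) - P‖ ≤ 1 + ‖P‖ :=
      (norm_sub_le _ _).trans (by gcongr; exact ContinuousLinearMap.norm_id_le)
    rw [h]
    calc ‖(1 - P) * ((R - 1) * P) * ↑u⁻¹‖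
        ≤ ‖(1 : E →L[𝕜] E) - P‖ * ‖(R - 1) * P‖ * ‖(↑u⁻¹ : E →L[𝕜] E)‖ :=
          (norm_mul_le _ _).trans (by gcongr; exact norm_mul_le _ _)
      _ ≤ (1 + ‖P‖) * ‖(R - 1) * P‖ * 2 := by gcongr
      _ = 2 * (1 + ‖P‖) * ‖(R - 1) * P‖ := by ring

end Perturbation

section FiniteRank

variable {𝕜 D E F : Type*} [NontriviallyNormedField 𝕜] [CompleteSpace 𝕜]
  [NormedAddCommGroup D] [NormedSpace 𝕜 D] [NormedAddCommGroup E] [NormedSpace 𝕜 E]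
  [NormedAddCommGroup F] [NormedSpace 𝕜 F] {ι : Type*} {l : Filter ι}

theorem tendsto_nhds_zero_of_tendsto_apply_of_finiteDimensional [FiniteDimensional 𝕜 E]
    {f : ι → E →L[𝕜] F} (hf : ∀ x, Tendsto (fun i => f i x) l (𝓝 0)) :
    Tendsto f l (𝓝 0) := by
  let v := Module.finBasis 𝕜 E
  obtain ⟨C, -, hC⟩ := v.exists_opNorm_le (F := F)
  rw [tendsto_zero_iff_norm_tendsto_zero]
  refine squeeze_zero (fun _ => norm_nonneg _)
    (fun i => hC (M := ∑ t, ‖f i (v t)‖) (by positivity)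
      (fun t => Finset.single_le_sum (fun t _ => norm_nonneg (f i (v t))) (Finset.mem_univ t)))
    ?_
  simpa using (tendsto_finsetSum _ fun t _ => (hf (v t)).norm).const_mul C

theorem tendsto_comp_nhds_zero_of_tendsto_apply (G : D →L[𝕜] E)
    [FiniteDimensional 𝕜 (LinearMap.range (G : D →ₗ[𝕜] E))]
    {f : ι → E →L[𝕜] F} (hf : ∀ x, Tendsto (fun i => f i x) l (𝓝 0)) :
    Tendsto (fun i => (f i).comp G) l (𝓝 0) := by
  set L := LinearMap.range (G : D →ₗ[𝕜] E)
  have hL : Tendsto (fun i => (f i).comp L.subtypeL) l (𝓝 0) :=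
    tendsto_nhds_zero_of_tendsto_apply_of_finiteDimensional fun x => hf x
  have h := ((ContinuousLinearMap.compL 𝕜 D L F).flip
    (G.codRestrict L fun x => LinearMap.mem_range_self _ x)).continuous.tendsto 0 |>.comp hL
  rw [map_zero] at h
  exact h.congr fun i => rfl

theorem tendsto_norm_sub_one_mul_of_tendsto_apply {R : ι → E →L[𝕜] E}
    (hR : ∀ x, Tendsto (fun i => R i x) l (𝓝 x)) (G : E →L[𝕜] E)
    [FiniteDimensional 𝕜 (LinearMap.range (G : E →ₗ[𝕜] E))] :
    Tendsto (fun i => ‖(R i - 1) * G‖) l (𝓝 0) :=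
  (tendsto_comp_nhds_zero_of_tendsto_apply G fun x => tendsto_sub_nhds_zero_iff.2 (hR x)).norm.trans
    (by rw [norm_zero])

end FiniteRank

theorem tendsto_apply_of_closure_iUnion_eq_univ {𝕜 E : Type*} [NontriviallyNormedField 𝕜]
    [NormedAddCommGroup E] [NormedSpace 𝕜 E] {V : ℕ → Submodule 𝕜 E} (hmono : Monotone V)
    (hV : closure (⋃ i, (V i : Set E)) = univ) {π : ℕ → E →L[𝕜] E}
    (hπfix : ∀ n, ∀ v ∈ V n, π n v = v) {M : ℝ} (hπM : ∀ n, ‖π n‖ ≤ M) (x : E) :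
    Tendsto (fun n => π n x) atTop (𝓝 x) := by
  have hequi : Equicontinuous ((↑) ∘ π) :=
    ((NormedSpace.equicontinuous_TFAE π).out 5 1).mp (⟨M, hπM⟩ : ∃ C, ∀ n, ‖π n‖ ≤ C)
  have hsub : ⋃ i, (V i : Set E) ⊆ {x | Tendsto (fun n => π n x) atTop (𝓝 (id x))} := by
    simp only [iUnion_subset_iff]
    intro i v hv
    exact tendsto_const_nhds.congr' <| eventually_atTop.2
      ⟨i, fun n hn => (hπfix n v (hmono hn hv)).symm⟩
  have := (hequi.isClosed_setOfPred_tendsto continuous_id).closure_subset_iff.2 hsub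
  rw [hV] at this
  exact this (mem_univ x)

theorem exists_projection_absorbed_by_idempotent {𝕜 E : Type*} [NontriviallyNormedField 𝕜]
    [NormedAddCommGroup E] [NormedSpace 𝕜 E] {W : Submodule 𝕜 E} {π Q : E →L[𝕜] E}
    (hπmem : ∀ x, π x ∈ W) (hπfix : ∀ w ∈ W, π w = w) (hQ : Q * Q = Q)
    (hQmem : ∀ x, Q x ∈ W) :
    ∃ ρ : E →L[𝕜] E, (∀ x, ρ x ∈ W) ∧ (∀ w ∈ W, ρ w = w) ∧ Q * ρ = Q ∧
      ‖ρ‖ ≤ ‖π‖ + ‖Q‖ * (1 + ‖π‖) := by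
  refine ⟨π + Q * (1 - π), fun x => ?_, fun w hw => ?_, ?_, ?_⟩
  · simp only [add_apply, mul_apply_eq_comp]
    exact W.add_mem (hπmem x) (hQmem _)
  · simp [hπfix w hw]
  · rw [mul_add, ← mul_assoc, hQ, mul_sub, mul_one]; abel
  · have h1π : ‖(1 : E →L[𝕜] E) - π‖ ≤ 1 + ‖π‖ :=
      (norm_sub_le _ _).trans (by gcongr; exact ContinuousLinearMap.norm_id_le)
    exact (norm_add_le _ _).trans (by gcongr; exact (norm_mul_le _ _).trans (by gcongr))

theorem List.prod_range_map_mul_eq_mul_prod {M : Type*} [Monoid M] {a b : ℕ → M}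
    (hba : ∀ n, b n * a n = b n) (k l : ℕ) :
    ((List.range (l + 1)).map fun i => a (k + i) * b (k + i + 1)).prod =
      a k * ((List.range (l + 1)).map fun i => b (k + 1 + i)).prod := by
  induction l with
  | zero => simp
  | succ l ih =>
    rw [List.prod_range_succ, ih, List.prod_range_succ _ (l + 1), List.prod_range_succ _ l]
    simp only [mul_assoc, ← add_assoc, add_right_comm k 1]
    rw [← mul_assoc (b _), hba]

theorem norm_prod_range_sub_le {R : Type*} [NormedRing R] {S Q : ℕ → R} {C θ : ℝ}
    (hS : ∀ n, S n * S (n + 1) = S n) (hSC : ∀ n, ‖S n‖ ≤ C) (hθ : 0 ≤ θ)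
    (hCθ : 2 * (C + 1) * θ ≤ 1) (hQS : ∀ n, ‖Q n - S n‖ ≤ θ ^ n) (k l : ℕ) :
    ‖((List.range (l + 1)).map fun i => Q (k + i)).prod - S k‖ ≤ 2 * (C + 1) * θ ^ k := by
  have hC : 0 ≤ C := (norm_nonneg _).trans (hSC 0)
  have hθ1 : θ ≤ 1 := by nlinarith
  have hQC : ∀ n, ‖Q n‖ ≤ C + 1 := fun n =>
    (norm_le_norm_add_norm_sub' (Q n) (S n)).trans (add_le_add (hSC n) ((hQS n).trans
      (pow_le_one₀ hθ hθ1)))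
  induction l generalizing k with
  | zero =>
    simp only [zero_add, List.range_one, List.map_cons, List.map_nil, List.prod_cons,
      List.prod_nil, add_zero, mul_one]
    exact (hQS k).trans (le_mul_of_one_le_left (by positivity) (by linarith))
  | succ l ih =>
    have hshift : (fun i => Q (k + (i + 1))) = fun i => Q (k + 1 + i) := by
      funext i; rw [add_comm i, add_assoc]
    rw [List.prod_range_succ', add_zero, hshift]
    set T := ((List.range (l + 1)).map fun i => Q (k + 1 + i)).prod
    have hsplit : Q k * T - S k = Q k * (T - S (k + 1)) + (Q k - S k) * S (k + 1) := by
      rw [mul_sub, sub_mul, hS]; abel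
    calc ‖Q k * T - S k‖ ≤ ‖Q k‖ * ‖T - S (k + 1)‖ + ‖Q k - S k‖ * ‖S (k + 1)‖ := by
          rw [hsplit]
          exact (norm_add_le _ _).trans (add_le_add (norm_mul_le _ _) (norm_mul_le _ _))
      _ ≤ (C + 1) * (2 * (C + 1) * θ ^ (k + 1)) + θ ^ k * C := by
          gcongr
          · exact hQC k
          · exact ih (k + 1)
          · exact hQS k
          · exact hSC _
      _ = (C + 1) * θ ^ k * (2 * (C + 1) * θ) + θ ^ k * C := by ring
      _ ≤ (C + 1) * θ ^ k * 1 + θ ^ k * C := by gcongr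
      _ ≤ 2 * (C + 1) * θ ^ k := by nlinarith [pow_nonneg hθ k]

section Chain

variable {X : Type*} [NormedAddCommGroup X] [NormedSpace ℝ X]

theorem coe_projChain_apply {W : ℕ → Submodule ℝ X} (P : (n : ℕ) → (W (n + 1) →L[ℝ] W n))
    {G : ℕ → X →L[ℝ] X} (hPG : ∀ n x, (P n x : X) = G n x) (k j : ℕ) (x : W (k + j + 1)) :
    (projChain P k j x : X) = ((List.range (j + 1)).map fun i => G (k + i)).prod x := by
  induction j with
  | zero => simp [projChain, hPG]
  | succ j ih =>
    rw [List.prod_range_succ, mul_apply_eq_comp, ← hPG]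
    exact ih _

theorem norm_projChain_le {W : ℕ → Submodule ℝ X} (P : (n : ℕ) → (W (n + 1) →L[ℝ] W n))
    {G : ℕ → X →L[ℝ] X} (hPG : ∀ n x, (P n x : X) = G n x) (k j : ℕ) :
    ‖projChain P k j‖ ≤ ‖((List.range (j + 1)).map fun i => G (k + i)).prod‖ :=
  ContinuousLinearMap.opNorm_le_bound _ (norm_nonneg _) fun x => by
    change ‖(projChain P k j x : X)‖ ≤ _ * ‖(x : X)‖
    rw [coe_projChain_apply P hPG]
    exact ContinuousLinearMap.le_opNorm _ _

/-- The chain maps are `ρ n * Q (n + 1)`, with `ρ n` a projection onto `V (j (n + 1))` absorbed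
by `Q n`, so that their compositions telescope to `ρ k * Q (k + 1) * ⋯ * Q (k + l + 1)`. -/
theorem not_chainCondition_of_norm_prod_le {V : ℕ → Submodule ℝ X} {π : ℕ → X →L[ℝ] X}
    (hπmem : ∀ n x, π n x ∈ V n) (hπfix : ∀ n, ∀ v ∈ V n, π n v = v) {M : ℝ}
    (hπM : ∀ n, ‖π n‖ ≤ M) {j : ℕ → ℕ} (hj : StrictMono j) {Q : ℕ → X →L[ℝ] X}
    (hQ : ∀ n, Q n * Q n = Q n) (hQfix : ∀ n, ∀ v ∈ V (j n), Q n v = v)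
    (hQmem : ∀ n x, Q n x ∈ V (j (n + 1))) {B : ℝ}
    (hQB : ∀ k l, ‖((List.range (l + 1)).map fun i => Q (k + i)).prod‖ ≤ B) :
    ¬ ChainCondition V := by
  intro hc
  choose ρ hρmem hρfix hQρ hρnorm using fun n =>
    exists_projection_absorbed_by_idempotent (hπmem (j (n + 1))) (hπfix (j (n + 1))) (hQ n)
      (hQmem n)
  have hB : 0 ≤ B := (norm_nonneg _).trans (hQB 0 0)
  have hQn : ∀ n, ‖Q n‖ ≤ B := fun n => by simpa using hQB n 0
  have hρB : ∀ n, ‖ρ n‖ ≤ M + B * (1 + M) := fun n =>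
    (hρnorm n).trans (by gcongr; exacts [hπM _, hQn n, hπM _])
  let G n := ρ n * Q (n + 1)
  have hGmem : ∀ n x, G n x ∈ V (j (n + 1)) := fun n x => hρmem n _
  let P n : V (j (n + 1 + 1)) →L[ℝ] V (j (n + 1)) :=
    ((G n).comp (V (j (n + 1 + 1))).subtypeL).codRestrict _ fun x => hGmem n x
  have hPfix : ∀ n (x : X) (hx : x ∈ V (j (n + 1))) (hx' : x ∈ V (j (n + 1 + 1))),
      (P n ⟨x, hx'⟩ : X) = x := by
    intro n x hx _
    change ρ n (Q (n + 1) x) = x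
    rw [hQfix _ x hx, hρfix n x hx]
  obtain ⟨k, l, hkl⟩ := hc (fun n => j (n + 1)) (hj.comp (strictMono_id.add_const 1)) P hPfix
    ((M + B * (1 + M)) * B)
  refine hkl.not_ge ((norm_projChain_le (W := fun n => V (j (n + 1))) P (G := G)
    (fun n x => rfl) k (l + 1)).trans ?_)
  calc _ = ‖ρ k * ((List.range (l + 1 + 1)).map fun i => Q (k + 1 + i)).prod‖ :=
        congrArg norm (List.prod_range_map_mul_eq_mul_prod hQρ k (l + 1))
    _ ≤ (M + B * (1 + M)) * B := (norm_mul_le _ _).trans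
        (mul_le_mul (hρB k) (hQB (k + 1) (l + 1)) (norm_nonneg _) ((norm_nonneg _).trans (hρB k)))

end Chain

section NoFDD

variable {X : Type*} [NormedAddCommGroup X] [NormedSpace ℝ X] [CompleteSpace X]
  {V : ℕ → Submodule ℝ X} {π : ℕ → X →L[ℝ] X} {S : ℕ → X →L[ℝ] X}

/-- First fix `V j`, then push the finite-dimensional range into `V j'` using `π j'`; both are
small perturbations since `S m → 1` and `π j' → 1` uniformly on finite-dimensional subspaces. -/
theorem eventually_exists_idempotent_near (hmono : Monotone V)
    (hfd : ∀ i, FiniteDimensional ℝ (V i)) (hπmem : ∀ n x, π n x ∈ V n)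
    (hπfix : ∀ n, ∀ v ∈ V n, π n v = v) (hπ : ∀ x, Tendsto (fun n => π n x) atTop (𝓝 x))
    (hS : ∀ n, S n * S n = S n)
    (hSfd : ∀ n, FiniteDimensional ℝ (LinearMap.range (S n : X →ₗ[ℝ] X)))
    (hSx : ∀ x, Tendsto (fun n => S n x) atTop (𝓝 x)) {C : ℝ} (hSC : ∀ n, ‖S n‖ ≤ C)
    (j : ℕ) {ε : ℝ} (hε : 0 < ε) :
    ∀ᶠ m in atTop, ∃ j' > j, ∃ Q : X →L[ℝ] X, Q * Q = Q ∧ (∀ v ∈ V j, Q v = v) ∧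
      (∀ x, Q x ∈ V j') ∧ ‖Q - S m‖ ≤ ε := by
  have hC : 0 ≤ C := (norm_nonneg _).trans (hSC 0)
  have := hfd j
  have : FiniteDimensional ℝ (LinearMap.range (π j : X →ₗ[ℝ] X)) :=
    Submodule.finiteDimensional_of_le (S₂ := V j) (by rintro _ ⟨x, rfl⟩; exact hπmem j x)
  have hη : 0 < min (1 / 2) (ε / (4 * (C + 1))) := by positivity
  filter_upwards [(tendsto_norm_sub_one_mul_of_tendsto_apply hSx (π j)).eventually
    (ge_mem_nhds hη)] with m hm
  have := hSfd m
  obtain ⟨Q₁, hQ₁, hQ₁fix, hQ₁fd, hQ₁S⟩ :=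
    exists_idempotent_near_fixing (hS m) (π j) (hm.trans (min_le_left _ _))
  have hη₁ : 0 < min (1 / 2) (ε / (4 * (1 + ‖Q₁‖))) := by positivity
  obtain ⟨j', hj'η, hj'⟩ := (((tendsto_norm_sub_one_mul_of_tendsto_apply hπ Q₁).eventually
    (ge_mem_nhds hη₁)).and (eventually_gt_atTop j)).exists
  obtain ⟨Q, hQ, hQfix, hQrange, hQQ₁⟩ :=
    exists_idempotent_near_range_le hQ₁ (π j') (hj'η.trans (min_le_left _ _))
  refine ⟨j', hj', Q, hQ, fun v hv => hQfix v (hQ₁fix v (hπfix j v hv))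
    (hπfix j' v (hmono hj'.le hv)), fun x => ?_, ?_⟩
  · obtain ⟨y, hy⟩ := hQrange ⟨x, rfl⟩
    have hy : Q x = π j' y := hy.symm
    rw [hy]
    exact hπmem j' y
  have h₁ : ‖Q₁ - S m‖ ≤ ε / 2 :=
    calc ‖Q₁ - S m‖ ≤ 2 * (ε / (4 * (C + 1))) * C :=
          hQ₁S.trans (by gcongr; exacts [hm.trans (min_le_right _ _), hSC m])
      _ = ε / 2 * (C / (C + 1)) := by field_simp; ring
      _ ≤ ε / 2 := mul_le_of_le_one_right (by positivity) ((div_le_one₀ (by positivity)).2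
          (by linarith))
  have h₂ : ‖Q - Q₁‖ ≤ ε / 2 :=
    calc ‖Q - Q₁‖ ≤ 2 * (1 + ‖Q₁‖) * (ε / (4 * (1 + ‖Q₁‖))) :=
          hQQ₁.trans (by gcongr; exact hj'η.trans (min_le_right _ _))
      _ = ε / 2 := by field_simp; ring
  calc ‖Q - S m‖ ≤ ‖Q - Q₁‖ + ‖Q₁ - S m‖ := norm_sub_le_norm_sub_add_norm_sub _ _ _
    _ ≤ ε := by linarith

theorem exists_seq_idempotent_near (hmono : Monotone V)
    (hfd : ∀ i, FiniteDimensional ℝ (V i)) (hπmem : ∀ n x, π n x ∈ V n)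
    (hπfix : ∀ n, ∀ v ∈ V n, π n v = v) (hπ : ∀ x, Tendsto (fun n => π n x) atTop (𝓝 x))
    (hS : ∀ n, S n * S n = S n)
    (hSfd : ∀ n, FiniteDimensional ℝ (LinearMap.range (S n : X →ₗ[ℝ] X)))
    (hSx : ∀ x, Tendsto (fun n => S n x) atTop (𝓝 x)) {C : ℝ} (hSC : ∀ n, ‖S n‖ ≤ C)
    {ε : ℕ → ℝ} (hε : ∀ n, 0 < ε n) :
    ∃ (j m : ℕ → ℕ) (Q : ℕ → X →L[ℝ] X), StrictMono j ∧ StrictMono m ∧ ∀ n,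
      Q n * Q n = Q n ∧ (∀ v ∈ V (j n), Q n v = v) ∧ (∀ x, Q n x ∈ V (j (n + 1))) ∧
      ‖Q n - S (m n)‖ ≤ ε n := by
  have step : ∀ n (p : ℕ × ℕ), ∃ q : ℕ × ℕ × (X →L[ℝ] X), p.1 < q.1 ∧ p.2 < q.2.1 ∧
      q.2.2 * q.2.2 = q.2.2 ∧ (∀ v ∈ V p.1, q.2.2 v = v) ∧ (∀ x, q.2.2 x ∈ V q.1) ∧
      ‖q.2.2 - S q.2.1‖ ≤ ε n := by
    rintro n ⟨j, m₀⟩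
    obtain ⟨m, ⟨j', hj', Q, hQ⟩, hm⟩ := ((eventually_exists_idempotent_near hmono hfd hπmem
      hπfix hπ hS hSfd hSx hSC j (hε n)).and (eventually_gt_atTop m₀)).exists
    exact ⟨(j', m, Q), hj', hm, hQ⟩
  choose next hnext using step
  -- the state `s n = (j n, m (n - 1))` of the recursive construction
  let s : ℕ → ℕ × ℕ := fun n => Nat.rec (0, 0) (fun n p => ((next n p).1, (next n p).2.1)) n
  exact ⟨fun n => (s n).1, fun n => (next n (s n)).2.1, fun n => (next n (s n)).2.2,
    strictMono_nat_of_lt_succ fun n => (hnext n (s n)).1,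
    strictMono_nat_of_lt_succ fun n => (hnext (n + 1) (s (n + 1))).2.1,
    fun n => (hnext n (s n)).2.2⟩

theorem not_hasFDDProperty_of_chainCondition (hmono : Monotone V)
    (hfd : ∀ i, FiniteDimensional ℝ (V i)) (hπmem : ∀ n x, π n x ∈ V n)
    (hπfix : ∀ n, ∀ v ∈ V n, π n v = v) (hπ : ∀ x, Tendsto (fun n => π n x) atTop (𝓝 x))
    {M : ℝ} (hπM : ∀ n, ‖π n‖ ≤ M) (hc : ChainCondition V) :
    ¬ HasFDDProperty X := by
  rintro ⟨S, hSfd, hSconv, hScomm⟩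
  have hSx : ∀ x, Tendsto (fun n => S n x) atTop (𝓝 x) := fun x => by
    simpa [tendsto_iff_norm_sub_tendsto_zero, norm_sub_rev] using hSconv x
  have hS_mul : ∀ a b, a ≤ b → S a * S b = S a := fun a b hab =>
    (hScomm b a).trans (congrArg S (min_eq_right hab))
  obtain ⟨C, hSC⟩ := banach_steinhaus fun x =>
    ⟨_, fun n => (hSx x).norm.bddAbove_range.choose_spec (mem_range_self n)⟩
  have hC : 0 ≤ C := (norm_nonneg _).trans (hSC 0)
  set θ := 1 / (2 * (C + 1))
  have hCθ : 2 * (C + 1) * θ ≤ 1 := (mul_one_div_cancel (by positivity)).le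
  obtain ⟨j, m, Q, hj, hm, hQ⟩ := exists_seq_idempotent_near hmono hfd hπmem hπfix hπ
    (fun n => by simpa using hS_mul n n le_rfl) hSfd hSx hSC (ε := fun n => θ ^ n)
    (fun n => by positivity)
  have hprod := norm_prod_range_sub_le (S := fun n => S (m n)) (Q := Q)
    (fun n => hS_mul _ _ (hm.monotone n.le_succ)) (fun n => hSC _) (by positivity) hCθ
    (fun n => (hQ n).2.2.2)
  refine not_chainCondition_of_norm_prod_le hπmem hπfix hπM hj (fun n => (hQ n).1)
    (fun n => (hQ n).2.1) (fun n => (hQ n).2.2.1) (B := 3 * C + 2) (fun k l => ?_) hc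
  have hθk : θ ^ k ≤ 1 := pow_le_one₀ (by positivity) (by nlinarith [show 0 < θ by positivity])
  calc _ ≤ ‖S (m k)‖ + ‖((List.range (l + 1)).map fun i => Q (k + i)).prod - S (m k)‖ :=
        norm_le_norm_add_norm_sub' _ _
    _ ≤ C + 2 * (C + 1) * 1 := by gcongr; exacts [hSC _, (hprod k l).trans (by gcongr)]
    _ = 3 * C + 2 := by ring

end NoFDD

theorem exists_projection_norm_lt_of_relProjConst_lt {X : Type*} [NormedAddCommGroup X]
    [NormedSpace ℝ X] {Y : Submodule ℝ X}
    (hY : ∃ P : X →L[ℝ] X, P.comp P = P ∧ LinearMap.range (P : X →ₗ[ℝ] X) = Y) {c : ℝ}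
    (hc : relProjConst Y < c) :
    ∃ P : X →L[ℝ] X, P.comp P = P ∧ LinearMap.range (P : X →ₗ[ℝ] X) = Y ∧ ‖P‖ < c := by
  obtain ⟨P, hP, hPY⟩ := hY
  have hbdd : BddBelow {c : ℝ | ∃ P : X →L[ℝ] X, P.comp P = P ∧
      LinearMap.range (P : X →ₗ[ℝ] X) = Y ∧ ‖P‖ = c} :=
    ⟨0, by rintro _ ⟨P, -, -, rfl⟩; exact norm_nonneg P⟩
  obtain ⟨_, ⟨P, hP, hPY, rfl⟩, hPc⟩ := (csInf_lt_iff hbdd ⟨‖P‖, P, hP, hPY, rfl⟩).1 hc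
  exact ⟨P, hP, hPY, hPc⟩

theorem pi_property_without_FDD_of_subspaces_general
    (X : Type*) [NormedAddCommGroup X] [NormedSpace ℝ X]
    [CompleteSpace X]
    (V : ℕ → Submodule ℝ X)
    (hmono : Monotone V) (hfd : ∀ i, FiniteDimensional ℝ (V i))
    -- (a) sup_i λ(X_i, X) < ∞
    (haproj : ∀ i, ∃ P : X →L[ℝ] X, P.comp P = P ∧ LinearMap.range (P : X →ₗ[ℝ] X) = V i)
    (habdd : ∃ C : ℝ, ∀ i, relProjConst (V i) ≤ C)
    -- (b) the union of the subspaces is dense in X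
    (hb : closure (⋃ i, (V i : Set X)) = Set.univ)
    -- (c) compositions of projections along any subsequence are unbounded
    (hc : ChainCondition V) :
    HasPiProperty X ∧ ¬ HasFDDProperty X := by
  obtain ⟨C, hC⟩ := habdd
  choose π hπ hπV hπC using fun i =>
    exists_projection_norm_lt_of_relProjConst_lt (haproj i) ((hC i).trans_lt (lt_add_one C))
  have hπmem : ∀ n x, π n x ∈ V n := fun n x => hπV n ▸ LinearMap.mem_range_self _ x
  have hπfix : ∀ n, ∀ v ∈ V n, π n v = v := by
    intro n v hv
    rw [← hπV n] at hv
    obtain ⟨x, rfl⟩ := hv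
    exact DFunLike.congr_fun (hπ n) x
  have hπx := tendsto_apply_of_closure_iUnion_eq_univ hmono hb hπfix fun n => (hπC n).le
  refine ⟨⟨π, hπ, fun n => hπV n ▸ hfd n, fun x => ?_⟩,
    not_hasFDDProperty_of_chainCondition hmono hfd hπmem hπfix hπx (fun n => (hπC n).le) hc⟩
  simpa [norm_sub_rev] using tendsto_iff_norm_sub_tendsto_zero.1 (hπx x)

theorem pi_property_without_FDD_of_subspaces
    (X : Type*) [NormedAddCommGroup X] [NormedSpace ℝ X]
    [CompleteSpace X] [TopologicalSpace.SeparableSpace X]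
    (V : ℕ → Submodule ℝ X)
    (hmono : Monotone V) (hfd : ∀ i, FiniteDimensional ℝ (V i))
    -- (a) sup_i λ(X_i, X) < ∞
    (haproj : ∀ i, ∃ P : X →L[ℝ] X, P.comp P = P ∧ LinearMap.range (P : X →ₗ[ℝ] X) = V i)
    (habdd : ∃ C : ℝ, ∀ i, relProjConst (V i) ≤ C)
    -- (b) the union of the subspaces is dense in X
    (hb : closure (⋃ i, (V i : Set X)) = Set.univ)
    -- (c) compositions of projections along any subsequence are unbounded
    (hc : ChainCondition V) :
    HasPiProperty X ∧ ¬ HasFDDProperty X :=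
  pi_property_without_FDD_of_subspaces_general X V hmono hfd haproj habdd hb hc
end

section
/- Let (W_i)_{i=1}^∞ be a finite dimensional decomposition of a Banach space X with decomposition constant K. Let ε_i > 0 satisfy ∑_{i=1}^∞ ε_i < 1/(2K), and for each i let E_i : W_i → X be a linear operator satisfying ‖E_i w − w‖ ≤ ε_i ‖w‖ for every w ∈ W_i. Then the subspaces (E_i(W_i))_{i=1}^∞ also form a finite dimensional decomposition of X. -/
open Filter Topology Metric Set

noncomputable section

/-- `(W i)` is a (Schauder) finite dimensional decomposition of `X`: every `x` has a
unique representation `x = ∑ᵢ wᵢ` with `wᵢ ∈ W i`, the series converging in norm. -/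
def IsFDD {X : Type*} [NormedAddCommGroup X] [NormedSpace ℝ X]
    (W : ℕ → Submodule ℝ X) : Prop :=
  ∀ x : X, ∃! w : (i : ℕ) → W i,
    Tendsto (fun n => ∑ i ∈ Finset.range n, ((w i : X))) atTop (𝓝 x)

/-- `S` is the sequence of canonical partial-sum projections associated with the
decomposition `(W i)`: `S n (∑ᵢ wᵢ) = ∑_{i < n} wᵢ`. -/
def IsPartialSumProj {X : Type*} [NormedAddCommGroup X] [NormedSpace ℝ X]
    (W : ℕ → Submodule ℝ X) (S : ℕ → X →L[ℝ] X) : Prop :=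
  ∀ (x : X) (w : (i : ℕ) → W i),
    Tendsto (fun n => ∑ i ∈ Finset.range n, ((w i : X))) atTop (𝓝 x) →
    ∀ n, S n x = ∑ i ∈ Finset.range n, ((w i : X))

/-! The block projections `P i = S (i+1) - S i` have norm at most `2K`, so
`D = ∑ i, (E i ∘ P i - P i)` has norm at most `2K ∑ ε i < 1`. Hence `T = 1 + D` is an
isomorphism of `X`, and it agrees with `E i` on `W i` because `P j` is the identity on `W j` and
vanishes on `W i` for `i ≠ j`. An isomorphism carries an FDD with partial-sum projections `S n`
to an FDD with partial-sum projections `T ∘ S n ∘ T⁻¹`, and `T (W i) = E i (W i)`. -/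

section Transport

variable {X Y : Type*} [NormedAddCommGroup X] [NormedSpace ℝ X]
  [NormedAddCommGroup Y] [NormedSpace ℝ Y] {W : ℕ → Submodule ℝ X}

theorem ContinuousLinearEquiv.tendsto_sum_apply_iff (e : X ≃L[ℝ] Y) (w : ∀ i, W i) (x : X) :
    Tendsto (fun n => ∑ i ∈ Finset.range n, e (w i)) atTop (𝓝 (e x)) ↔
      Tendsto (fun n => ∑ i ∈ Finset.range n, (w i : X)) atTop (𝓝 x) := by
  simp only [← map_sum]
  exact e.toHomeomorph.isInducing.tendsto_nhds_iff.symm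

theorem IsFDD.map (hW : IsFDD W) (e : X ≃L[ℝ] Y) :
    IsFDD fun i => (W i).map (e : X →ₗ[ℝ] Y) := by
  intro y
  refine (Equiv.existsUnique_congr
    (Equiv.piCongrRight fun i => (e.toLinearEquiv.submoduleMap (W i)).toEquiv) fun w => ?_).1
    (hW (e.symm y))
  simpa using (e.tendsto_sum_apply_iff w (e.symm y)).symm

theorem IsPartialSumProj.conj {S : ℕ → X →L[ℝ] X} (hS : IsPartialSumProj W S) (e : X ≃L[ℝ] Y) :
    IsPartialSumProj (fun i => (W i).map (e : X →ₗ[ℝ] Y))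
      fun n => (e : X →L[ℝ] Y) ∘L S n ∘L (e.symm : Y →L[ℝ] X) := by
  intro y v hv n
  let w : ∀ i, W i := fun i => (e.toLinearEquiv.submoduleMap (W i)).symm (v i)
  have hw : ∀ i, e (w i) = v i := fun i =>
    congrArg Subtype.val ((e.toLinearEquiv.submoduleMap (W i)).apply_symm_apply (v i))
  have hconv : Tendsto (fun n => ∑ i ∈ Finset.range n, (w i : X)) atTop (𝓝 (e.symm y)) := by
    rw [← e.tendsto_sum_apply_iff]
    simpa [hw] using hv
  simp [hS _ w hconv n, map_sum, hw]

theorem ContinuousLinearEquiv.norm_conj_le (e : X ≃L[ℝ] Y) (A : X →L[ℝ] X) :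
    ‖(e : X →L[ℝ] Y) ∘L A ∘L (e.symm : Y →L[ℝ] X)‖ ≤
      ‖(e : X →L[ℝ] Y)‖ * ‖A‖ * ‖(e.symm : Y →L[ℝ] X)‖ := by
  rw [mul_assoc]
  refine (ContinuousLinearMap.opNorm_comp_le _ _).trans ?_
  gcongr
  exact ContinuousLinearMap.opNorm_comp_le _ _

end Transport

section BlockProjections

variable {X : Type*} [NormedAddCommGroup X] [NormedSpace ℝ X] {W : ℕ → Submodule ℝ X}
  {S : ℕ → X →L[ℝ] X}

theorem IsPartialSumProj.apply_of_mem (hS : IsPartialSumProj W S) {j : ℕ} {u : X}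
    (hu : u ∈ W j) (n : ℕ) : S n u = if j < n then u else 0 := by
  let w : ∀ i, W i := Pi.single j ⟨u, hu⟩
  have hw : ∀ i, (w i : X) = if i = j then u else 0 := fun i => by
    by_cases h : i = j
    · subst h; simp [w]
    · simp [w, h]
  have hsum : ∀ n, ∑ i ∈ Finset.range n, (w i : X) = if j < n then u else 0 := fun n => by
    simp [hw, Finset.sum_ite_eq']
  rw [hS u w _ n, hsum]
  refine tendsto_const_nhds.congr' ?_
  filter_upwards [eventually_gt_atTop j] with n hn
  rw [hsum, if_pos hn]

def blockProj (S : ℕ → X →L[ℝ] X) (i : ℕ) : X →L[ℝ] X := S (i + 1) - S i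

theorem IsPartialSumProj.blockProj_mem (hS : IsPartialSumProj W S) (hW : IsFDD W) (i : ℕ)
    (x : X) : blockProj S i x ∈ W i := by
  obtain ⟨w, hw, -⟩ := hW x
  simp [blockProj, hS x w hw, Finset.sum_range_succ]

theorem IsPartialSumProj.blockProj_apply_of_mem (hS : IsPartialSumProj W S) {j : ℕ} {u : X}
    (hu : u ∈ W j) (i : ℕ) : blockProj S i u = if i = j then u else 0 := by
  simp only [blockProj, FunLike.coe_sub, Pi.sub_apply, hS.apply_of_mem hu]
  split_ifs <;> first | omega | simp

theorem norm_blockProj_le {K : ℝ} (hK : ∀ n, ‖S n‖ ≤ K) (i : ℕ) : ‖blockProj S i‖ ≤ 2 * K := by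
  have := norm_sub_le (S (i + 1)) (S i)
  unfold blockProj
  linarith [hK i, hK (i + 1)]

end BlockProjections

section Perturbation

variable {X : Type*} [NormedAddCommGroup X] [NormedSpace ℝ X] {W : ℕ → Submodule ℝ X}
  {S : ℕ → X →L[ℝ] X}

theorem exists_continuousLinearEquiv_apply_eq_add_tsum [CompleteSpace X] {D : ℕ → X →L[ℝ] X}
    (hD : Summable fun i => ‖D i‖) (hlt : ∑' i, ‖D i‖ < 1) :
    ∃ T : X ≃L[ℝ] X, ∀ x, T x = x + ∑' i, D i x := by
  have hnorm : ‖-∑' i, D i‖ < 1 := by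
    rw [norm_neg]
    exact (norm_tsum_le_tsum_norm hD).trans_lt hlt
  refine ⟨ContinuousLinearEquiv.unitsEquiv ℝ X (Units.oneSub _ hnorm), fun x => ?_⟩
  simpa using (ContinuousLinearMap.apply ℝ X x).map_tsum hD.of_norm

theorem exists_clm_apply_eq_comp_sub {V : Submodule ℝ X} (P : X →L[ℝ] X) (hP : ∀ x, P x ∈ V)
    (f : V →ₗ[ℝ] X) {c : ℝ} (hc : 0 ≤ c) (hf : ∀ v : V, ‖f v - v‖ ≤ c * ‖(v : X)‖) :
    ∃ D : X →L[ℝ] X, ‖D‖ ≤ c * ‖P‖ ∧ ∀ x, D x = f ⟨P x, hP x⟩ - P x := by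
  refine ⟨(f ∘ₗ (P : X →ₗ[ℝ] X).codRestrict V hP - P).mkContinuous (c * ‖P‖) fun x => ?_,
    LinearMap.mkContinuous_norm_le _ (by positivity) _, fun x => rfl⟩
  calc ‖f ⟨P x, hP x⟩ - P x‖ ≤ c * ‖P x‖ := hf _
    _ ≤ c * (‖P‖ * ‖x‖) := by gcongr; exact P.le_opNorm x
    _ = c * ‖P‖ * ‖x‖ := by ring

theorem IsFDD.exists_continuousLinearEquiv_apply_eq [CompleteSpace X] (hW : IsFDD W)
    (hS : IsPartialSumProj W S) {K : ℝ} (hK : ∀ n, ‖S n‖ ≤ K) {ε : ℕ → ℝ} (hε : ∀ i, 0 ≤ ε i)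
    (hsummable : Summable ε) (hsmall : 2 * K * ∑' i, ε i < 1) (E : ∀ i, W i →ₗ[ℝ] X)
    (hE : ∀ i (w : W i), ‖E i w - w‖ ≤ ε i * ‖(w : X)‖) :
    ∃ T : X ≃L[ℝ] X, ∀ j (v : W j), T v = E j v := by
  choose D hDnorm hD using fun i =>
    exists_clm_apply_eq_comp_sub (blockProj S i) (hS.blockProj_mem hW i) (E i) (hε i) (hE i)
  have hDle : ∀ i, ‖D i‖ ≤ 2 * K * ε i := fun i =>
    (hDnorm i).trans (by nlinarith [norm_blockProj_le hK i, hε i])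
  have hDsum : Summable fun i => ‖D i‖ :=
    (hsummable.mul_left (2 * K)).of_nonneg_of_le (fun _ => norm_nonneg _) hDle
  have hlt : ∑' i, ‖D i‖ < 1 := calc
    ∑' i, ‖D i‖ ≤ ∑' i, 2 * K * ε i := hDsum.tsum_le_tsum hDle (hsummable.mul_left _)
    _ = 2 * K * ∑' i, ε i := tsum_mul_left
    _ < 1 := hsmall
  obtain ⟨T, hT⟩ := exists_continuousLinearEquiv_apply_eq_add_tsum hDsum hlt
  refine ⟨T, fun j v => ?_⟩
  have hDv : ∀ i, D i v = if i = j then E j v - v else 0 := fun i => by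
    have hPv := hS.blockProj_apply_of_mem v.2 i
    rw [hD]
    split_ifs at hPv ⊢ with h
    · subst h
      rw [show (⟨blockProj S i v, _⟩ : W i) = v from Subtype.ext hPv, hPv]
    · rw [show (⟨blockProj S i v, _⟩ : W i) = 0 from Subtype.ext hPv, hPv, map_zero, sub_zero]
  rw [hT, tsum_eq_single j fun i hi => by rw [hDv, if_neg hi], hDv, if_pos rfl,
    add_sub_cancel]

end Perturbation

theorem LinearMap.range_eq_map_of_apply_eq {R M N : Type*} [Semiring R] [AddCommMonoid M]
    [Module R M] [AddCommMonoid N] [Module R N] {V : Submodule R M} (f : V →ₗ[R] N) (g : M →ₗ[R] N)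
    (h : ∀ v : V, g v = f v) : LinearMap.range f = V.map g := by
  rw [show f = g ∘ₗ V.subtype from LinearMap.ext fun v => (h v).symm, LinearMap.range_comp,
    Submodule.range_subtype]

theorem perturbed_FDD_general
    (X : Type*) [NormedAddCommGroup X] [NormedSpace ℝ X] [CompleteSpace X]
    (W : ℕ → Submodule ℝ X)
    (hW : IsFDD W)
    (S : ℕ → X →L[ℝ] X) (hS : IsPartialSumProj W S)
    (K : ℝ) (hK : ∀ n, ‖S n‖ ≤ K)
    (ε : ℕ → ℝ) (hε : ∀ i, 0 < ε i) (hsummable : Summable ε)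
    (hsum : ∑' i, ε i < 1 / (2 * K))
    (E : (i : ℕ) → ((W i : Submodule ℝ X) →ₗ[ℝ] X))
    (hE : ∀ (i : ℕ) (w : W i), ‖E i w - (w : X)‖ ≤ ε i * ‖(w : X)‖) :
    IsFDD (fun i => LinearMap.range (E i)) ∧
    ∃ S' : ℕ → X →L[ℝ] X,
      IsPartialSumProj (fun i => LinearMap.range (E i)) S' ∧
      ∃ K' : ℝ, ∀ n, ‖S' n‖ ≤ K' := by
  have hsmall : 2 * K * ∑' i, ε i < 1 := by
    rcases ((norm_nonneg _).trans (hK 0)).eq_or_lt with hK0 | hKpos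
    · simp [← hK0]
    · rwa [lt_div_iff₀ (by positivity), mul_comm] at hsum
  obtain ⟨T, hT⟩ := hW.exists_continuousLinearEquiv_apply_eq hS hK (fun i => (hε i).le) hsummable hsmall E hE
  have hrange : (fun i => LinearMap.range (E i)) = fun i => (W i).map (T : X →ₗ[ℝ] X) :=
    funext fun i => LinearMap.range_eq_map_of_apply_eq (E i) _ (hT i)
  rw [hrange]
  refine ⟨hW.map T, _, hS.conj T, ‖(T : X →L[ℝ] X)‖ * K * ‖(T.symm : X →L[ℝ] X)‖, fun n => ?_⟩
  exact (T.norm_conj_le (S n)).trans (by gcongr; exact hK n)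

theorem perturbed_FDD
    (X : Type*) [NormedAddCommGroup X] [NormedSpace ℝ X] [CompleteSpace X]
    (W : ℕ → Submodule ℝ X) (hfd : ∀ i, FiniteDimensional ℝ (W i))
    (hW : IsFDD W)
    (S : ℕ → X →L[ℝ] X) (hS : IsPartialSumProj W S)
    (K : ℝ) (hK : ∀ n, ‖S n‖ ≤ K)
    (ε : ℕ → ℝ) (hε : ∀ i, 0 < ε i) (hsummable : Summable ε)
    (hsum : ∑' i, ε i < 1 / (2 * K))
    (E : (i : ℕ) → ((W i : Submodule ℝ X) →ₗ[ℝ] X))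
    (hE : ∀ (i : ℕ) (w : W i), ‖E i w - (w : X)‖ ≤ ε i * ‖(w : X)‖) :
    IsFDD (fun i => LinearMap.range (E i)) ∧
    ∃ S' : ℕ → X →L[ℝ] X,
      IsPartialSumProj (fun i => LinearMap.range (E i)) S' ∧
      ∃ K' : ℝ, ∀ n, ‖S' n‖ ≤ K' :=
  perturbed_FDD_general X W hW S hS K hK ε hε hsummable hsum E hE

end
end

section
/- Let (V_i)_{i=1}^∞ be a finite dimensional decomposition of a Banach space X, let H be a finite-dimensional subspace of X satisfying V_i ⊆ H for i = 1, …, k, and let ε > 0. Then there exist an integer m ≥ k and a linear operator A : Y → X, where Y := V_{k+1} + V_{k+2} + ⋯ + V_{m+1} (a direct sum inside X), satisfying the following three conditions: (1) ‖A y − y‖ ≤ ε ‖y‖ for all y ∈ Y; (2) A(Y) ⊆ span((V_1 + ⋯ + V_{m+1}) ∪ H); (3) H ⊆ V_1 + V_2 + ⋯ + V_k + A(Y). Moreover A can be chosen so that A x = x for x ∈ V_1 + ⋯ + V_k (in particular the spaces V_1, …, V_k, A(Y), V_{m+2}, V_{m+3}, … form a blocking-type decomposition). -/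
open Filter Topology Metric Set

noncomputable section

/-!
Put `P = (1 - S k) H`: it lies in `H`, and `S k` vanishes on it. Since `P` is finite-dimensional,
`S (m + 1)` is uniformly `δ`-close to the identity on `P` for large `m`. Composing with a bounded
projection `π₀` of `X` onto `P` that kills `V 0 + ⋯ + V (k-1)`, the map `π₀ ∘ S (m + 1)` is
invertible on `P` by a Neumann series, with inverse `g` of norm at most `2`. Then
`A = 1 + (1 - S (m + 1)) ∘ g ∘ π₀` sends `S (m + 1) p` back to `p`, fixes `ker π₀`, and moves
every `x` by at most `2 ‖π₀‖ δ ‖x‖ ≤ ε ‖x‖`.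
-/

namespace IsPartialSumProj

variable {X : Type*} [NormedAddCommGroup X] [NormedSpace ℝ X]
  {V : ℕ → Submodule ℝ X} {S : ℕ → X →L[ℝ] X}

theorem apply_of_mem_s5 (hS : IsPartialSumProj V S) {i : ℕ} {v : X} (hv : v ∈ V i) (n : ℕ) :
    S n v = if i < n then v else 0 := by
  let w : (j : ℕ) → V j := Pi.single i ⟨v, hv⟩
  have hsum : ∀ n, ∑ j ∈ Finset.range n, (w j : X) = if i < n then v else 0 := fun n => by
    simp [w, Pi.apply_single (fun j (y : V j) => (y : X)) (fun _ => rfl),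
      Finset.sum_pi_single']
  refine (hS v w ?_ n).trans (hsum n)
  refine tendsto_atTop_of_eventually_const (i₀ := i + 1) fun N hN => ?_
  rw [hsum, if_pos (by omega)]

theorem apply_eq_self_of_mem (hS : IsPartialSumProj V S) {n : ℕ} {x : X}
    (hx : x ∈ ⨆ i ∈ Finset.Iio n, V i) : S n x = x := by
  suffices (⨆ i ∈ Finset.Iio n, V i) ≤ LinearMap.ker ((S n : X →ₗ[ℝ] X) - LinearMap.id) by
    simpa [sub_eq_zero] using this hx
  refine iSup₂_le fun i hi v hv => ?_
  simp [hS.apply_of_mem_s5 hv, Finset.mem_Iio.1 hi]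

theorem apply_sub_apply_mem (hS : IsPartialSumProj V S) (hV : IsFDD V) (x : X) {j n : ℕ}
    (hjn : j ≤ n) : S n x - S j x ∈ ⨆ i ∈ Finset.Ico j n, V i := by
  obtain ⟨w, hw, -⟩ := hV x
  rw [hS x w hw, hS x w hw, ← Finset.sum_Ico_eq_sub _ hjn]
  exact Submodule.sum_mem _ fun i hi => le_biSup V hi (w i).2

theorem apply_mem (hS : IsPartialSumProj V S) (hV : IsFDD V) (x : X) (n : ℕ) :
    S n x ∈ ⨆ i ∈ Finset.Iio n, V i := by
  obtain ⟨w, hw, -⟩ := hV x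
  rw [hS x w hw]
  exact Submodule.sum_mem _ fun i hi => le_biSup V (by simpa using hi) (w i).2

theorem apply_apply_self (hS : IsPartialSumProj V S) (hV : IsFDD V) (x : X) (n : ℕ) :
    S n (S n x) = S n x :=
  hS.apply_eq_self_of_mem (hS.apply_mem hV x n)

theorem tendsto_apply (hS : IsPartialSumProj V S) (hV : IsFDD V) (x : X) :
    Tendsto (fun n => S n x) atTop (𝓝 x) := by
  obtain ⟨w, hw, -⟩ := hV x
  exact hw.congr fun n => (hS x w hw n).symm

variable {H : Submodule ℝ X} {k m : ℕ}

theorem apply_eq_zero_of_mem_map (hS : IsPartialSumProj V S) (hV : IsFDD V) {p : X}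
    (hp : p ∈ H.map ((1 - S k : X →L[ℝ] X) : X →ₗ[ℝ] X)) : S k p = 0 := by
  obtain ⟨h, -, rfl⟩ := hp
  simp [hS.apply_apply_self hV]

theorem map_one_sub_le (hS : IsPartialSumProj V S) (hV : IsFDD V)
    (hVH : ∀ i < k, V i ≤ H) : H.map ((1 - S k : X →L[ℝ] X) : X →ₗ[ℝ] X) ≤ H := by
  rintro _ ⟨h, hh, rfl⟩
  exact sub_mem hh (iSup₂_le (fun i hi => hVH i (Finset.mem_Iio.1 hi)) (hS.apply_mem hV h k))

theorem map_le_sup_of_sub_mem (hS : IsPartialSumProj V S) (hV : IsFDD V) {P : Submodule ℝ X}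
    (hPH : P ≤ H) {A : X →ₗ[ℝ] X}
    (hA : ∀ x, A x - x ∈ P ⊔ LinearMap.range (S (m + 1) : X →ₗ[ℝ] X)) :
    (⨆ i ∈ Finset.Icc k m, V i).map A ≤ (⨆ i ∈ Finset.Iic m, V i) ⊔ H := by
  have hY : (⨆ i ∈ Finset.Icc k m, V i) ≤ ⨆ i ∈ Finset.Iic m, V i :=
    biSup_mono fun i hi => by simp_all
  have hrange : LinearMap.range (S (m + 1) : X →ₗ[ℝ] X) ≤ ⨆ i ∈ Finset.Iic m, V i := by
    rintro _ ⟨x, rfl⟩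
    simpa [Nat.lt_succ_iff] using hS.apply_mem hV x (m + 1)
  rintro _ ⟨y, hy, rfl⟩
  rw [← add_sub_cancel y (A y)]
  exact add_mem (Submodule.mem_sup_left (hY hy))
    (sup_le (hPH.trans le_sup_right) (hrange.trans le_sup_left) (hA y))

theorem le_sup_map_of_apply_eq (hS : IsPartialSumProj V S) (hV : IsFDD V) (hkm : k ≤ m)
    {A : X →ₗ[ℝ] X} (hA : ∀ p ∈ H.map ((1 - S k : X →L[ℝ] X) : X →ₗ[ℝ] X), A (S (m + 1) p) = p) :
    H ≤ (⨆ i ∈ Finset.Iio k, V i) ⊔ (⨆ i ∈ Finset.Icc k m, V i).map A := by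
  intro h hh
  have hp : h - S k h ∈ H.map ((1 - S k : X →L[ℝ] X) : X →ₗ[ℝ] X) := ⟨h, hh, by simp⟩
  have hSp : S (m + 1) (h - S k h) ∈ ⨆ i ∈ Finset.Icc k m, V i := by
    simpa [hS.apply_eq_zero_of_mem_map hV hp, Finset.Ico_add_one_right_eq_Icc] using
      hS.apply_sub_apply_mem hV (h - S k h) (show k ≤ m + 1 by omega)
  rw [← add_sub_cancel (S k h) h]
  exact add_mem (Submodule.mem_sup_left (hS.apply_mem hV h k))
    (Submodule.mem_sup_right ⟨_, hSp, hA _ hp⟩)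

end IsPartialSumProj

section FiniteDimensional

variable {𝕜 E F ι : Type*} [NontriviallyNormedField 𝕜] [CompleteSpace 𝕜]
  [NormedAddCommGroup E] [NormedSpace 𝕜 E] [NormedAddCommGroup F] [NormedSpace 𝕜 F]

theorem ContinuousLinearMap.tendsto_of_tendsto_apply [FiniteDimensional 𝕜 E] {l : Filter ι}
    {T : ι → E →L[𝕜] F} {T₀ : E →L[𝕜] F} (h : ∀ x, Tendsto (fun i => T i x) l (𝓝 (T₀ x))) :
    Tendsto T l (𝓝 T₀) := by
  let b := Module.finBasis 𝕜 E
  obtain ⟨C, -, hC⟩ := b.exists_opNorm_le (F := F)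
  have hb : Tendsto (fun i => ∑ j, ‖T i (b j) - T₀ (b j)‖) l (𝓝 0) := by
    simpa using tendsto_finsetSum Finset.univ fun j _ => (h (b j)).sub_const (T₀ (b j)) |>.norm
  rw [tendsto_iff_norm_sub_tendsto_zero]
  refine squeeze_zero (fun _ => norm_nonneg _) (fun i => ?_) (by simpa using hb.const_mul C)
  exact hC (Finset.sum_nonneg fun j _ => norm_nonneg _) fun j =>
    Finset.single_le_sum (f := fun j => ‖T i (b j) - T₀ (b j)‖) (fun j _ => norm_nonneg _)
      (Finset.mem_univ j)

theorem Submodule.eventually_norm_apply_sub_le (P : Submodule 𝕜 E) [FiniteDimensional 𝕜 P]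
    {l : Filter ι} {T : ι → E →L[𝕜] E} (h : ∀ x, Tendsto (fun i => T i x) l (𝓝 x))
    {δ : ℝ} (hδ : 0 < δ) : ∀ᶠ i in l, ∀ p ∈ P, ‖T i p - p‖ ≤ δ * ‖p‖ := by
  have hT : Tendsto (fun i => T i ∘L P.subtypeL) l (𝓝 P.subtypeL) :=
    ContinuousLinearMap.tendsto_of_tendsto_apply fun p => h p
  filter_upwards [(tendsto_iff_norm_sub_tendsto_zero.1 hT).eventually_le_const hδ]
    with i hi p hp
  exact ((T i ∘L P.subtypeL - P.subtypeL).le_opNorm ⟨p, hp⟩).trans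
    (mul_le_mul_of_nonneg_right hi (norm_nonneg _))

end FiniteDimensional

section NearIdentity

variable {𝕜 E : Type*} [NontriviallyNormedField 𝕜] [NormedAddCommGroup E] [NormedSpace 𝕜 E]
  (P : Submodule 𝕜 E) [CompleteSpace P] {π : E →L[𝕜] P} {T : E →L[𝕜] E} {δ : ℝ}

theorem Submodule.exists_inverse_comp_of_norm_apply_sub_le (hπ : ∀ p : P, π p = p)
    (hT : ∀ p ∈ P, ‖T p - p‖ ≤ δ * ‖p‖) (hπδ : ‖π‖ * δ ≤ 1 / 2) :
    ∃ g : P →L[𝕜] P, (∀ p : P, g (π (T p)) = p) ∧ ∀ q, ‖g q‖ ≤ 2 * ‖q‖ := by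
  set θ : P →L[𝕜] P := π ∘L T ∘L P.subtypeL
  have hθ : ∀ p, ‖p - θ p‖ ≤ 1 / 2 * ‖p‖ := fun p => calc
    ‖p - θ p‖ = ‖π (p - T p)‖ := by simp [θ, hπ]
    _ ≤ ‖π‖ * (δ * ‖p‖) := by
      grw [π.le_opNorm, norm_sub_rev]
      exact mul_le_mul_of_nonneg_left (hT p p.2) (norm_nonneg π)
    _ ≤ 1 / 2 * ‖p‖ := by rw [← mul_assoc]; gcongr
  have hθ_lt : ‖1 - θ‖ < 1 :=
    ((1 - θ).opNorm_le_bound (by norm_num) hθ).trans_lt (by norm_num)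
  let u := Units.oneSub (1 - θ) hθ_lt
  have hu : (u : P →L[𝕜] P) = θ := sub_sub_cancel 1 θ
  set g : P →L[𝕜] P := ↑u⁻¹
  have hgθ : ∀ p, g (θ p) = p := fun p => by simpa [hu] using congr($(u.inv_mul) p)
  have hθg : ∀ q, θ (g q) = q := fun q => by simpa [hu] using congr($(u.mul_inv) q)
  refine ⟨g, hgθ, fun q => ?_⟩
  have h := hθ (g q)
  rw [hθg] at h
  linarith [norm_le_norm_add_norm_sub' (g q) q]

theorem Submodule.exists_near_identity_apply_eq (hπ : ∀ p : P, π p = p)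
    (hT : ∀ p ∈ P, ‖T p - p‖ ≤ δ * ‖p‖) (hδ : 0 ≤ δ) (hπδ : ‖π‖ * δ ≤ 1 / 2) {ε : ℝ}
    (hε : 2 * ‖π‖ * δ ≤ ε) :
    ∃ A : E →L[𝕜] E, (∀ x, ‖A x - x‖ ≤ ε * ‖x‖) ∧
      (∀ x, A x - x ∈ P ⊔ LinearMap.range (T : E →ₗ[𝕜] E)) ∧ (∀ p ∈ P, A (T p) = p) ∧
      ∀ x, π x = 0 → A x = x := by
  obtain ⟨g, hg, hg_le⟩ := P.exists_inverse_comp_of_norm_apply_sub_le hπ hT hπδ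
  set R : E →L[𝕜] E := P.subtypeL ∘L g ∘L π
  set A : E →L[𝕜] E := 1 + (1 - T) ∘L R
  have hA : ∀ x, A x - x = R x - T (R x) := fun x => by simp [A]
  refine ⟨A, fun x => ?_, fun x => ?_, fun p hp => ?_, fun x hx => ?_⟩
  · calc ‖A x - x‖ = ‖T (R x) - R x‖ := by rw [hA, norm_sub_rev]
      _ ≤ δ * (2 * (‖π‖ * ‖x‖)) := by
        grw [hT (R x) (g (π x)).2]
        exact mul_le_mul_of_nonneg_left ((hg_le _).trans (by gcongr; exact π.le_opNorm x)) hδ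
      _ ≤ ε * ‖x‖ := by grw [← hε]; exact le_of_eq (by ring)
  · rw [hA]
    exact sub_mem (Submodule.mem_sup_left (g (π x)).2)
      (Submodule.mem_sup_right (LinearMap.mem_range_self (T : E →ₗ[𝕜] E) _))
  · have : R (T p) = p := by simp [R, hg ⟨p, hp⟩]
    simp [A, this]
  · simp [A, R, hx]

end NearIdentity

/-- Indices are 0-based: the first `k` spaces are `V 0, …, V (k-1)`, and the block `Y`
consists of `V k, …, V m`. The operator `A` is given on all of `X`; only its values on
`V 0 + ⋯ + V (k-1)` and on `Y` matter. -/
theorem blocking_lemma_general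
    (X : Type*) [NormedAddCommGroup X] [NormedSpace ℝ X]
    (V : ℕ → Submodule ℝ X)
    (hV : IsFDD V)
    (S : ℕ → X →L[ℝ] X) (hS : IsPartialSumProj V S)
    (H : Submodule ℝ X) [FiniteDimensional ℝ H]
    (k : ℕ) (hVH : ∀ i < k, V i ≤ H)
    (ε : ℝ) (hε : 0 < ε) :
    ∃ m : ℕ, k ≤ m ∧ ∃ A : X →ₗ[ℝ] X,
      -- (1) `A` is a small perturbation of the identity on `Y = V k + ⋯ + V m`
      (∀ y ∈ ⨆ i ∈ Finset.Icc k m, V i, ‖A y - y‖ ≤ ε * ‖y‖) ∧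
      -- (2) `A(Y) ⊆ span((V 0 + ⋯ + V m) ∪ H)`
      (Submodule.map A (⨆ i ∈ Finset.Icc k m, V i) ≤ (⨆ i ∈ Finset.Iic m, V i) ⊔ H) ∧
      -- (3) `H ⊆ V 0 + ⋯ + V (k-1) + A(Y)`
      (H ≤ (⨆ i ∈ Finset.Iio k, V i) ⊔ Submodule.map A (⨆ i ∈ Finset.Icc k m, V i)) ∧
      -- moreover `A` is the identity on `V 0 + ⋯ + V (k-1)`
      (∀ x ∈ ⨆ i ∈ Finset.Iio k, V i, A x = x) := by
  set P := H.map ((1 - S k : X →L[ℝ] X) : X →ₗ[ℝ] X)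
  obtain ⟨π, hπ⟩ := Submodule.ClosedComplemented.of_finiteDimensional P
  set π₀ : X →L[ℝ] P := π ∘L (1 - S k)
  have hπ₀ : ∀ p : P, π₀ p = p := fun p => by
    simp [π₀, hS.apply_eq_zero_of_mem_map hV p.2, hπ]
  set δ := min ε 1 / (2 * (‖π₀‖ + 1))
  have hδ : 0 < δ := by positivity
  have hπδ : ‖π₀‖ * δ ≤ min ε 1 / 2 := by
    rw [mul_div_assoc', div_le_div_iff₀ (by positivity) two_pos]
    nlinarith [norm_nonneg π₀, lt_min hε one_pos]
  have hSm : ∀ x, Tendsto (fun m => S (m + 1) x) atTop (𝓝 x) :=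
    fun x => (hS.tendsto_apply hV x).comp (tendsto_add_atTop_nat 1)
  obtain ⟨m, hm, hkm⟩ :=
    ((P.eventually_norm_apply_sub_le hSm hδ).and (eventually_ge_atTop k)).exists
  obtain ⟨A, hAε, hAmem, hAS, hAfix⟩ := P.exists_near_identity_apply_eq (ε := ε) hπ₀ hm hδ.le
    (hπδ.trans (by linarith [min_le_right ε 1])) (by linarith [min_le_left ε 1])
  refine ⟨m, hkm, A, fun y _ => hAε y,
    hS.map_le_sup_of_sub_mem hV (hS.map_one_sub_le hV hVH) hAmem,
    hS.le_sup_map_of_apply_eq hV hkm hAS, fun x hx => hAfix x ?_⟩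
  simp [π₀, hS.apply_eq_self_of_mem hx]

/-- Lemma on enlarging a block of a finite dimensional decomposition so that it
(together with the first `k` spaces) captures a given finite-dimensional subspace `H`.
Indices are 0-based: the first `k` spaces are `V 0, …, V (k-1)`, and the block `Y`
consists of `V k, …, V m`. The operator `A` is given on all of `X`; only its values on
`V 0 + ⋯ + V (k-1)` and on `Y` matter. -/
theorem blocking_lemma
    (X : Type*) [NormedAddCommGroup X] [NormedSpace ℝ X] [CompleteSpace X]
    (V : ℕ → Submodule ℝ X) (hfd : ∀ i, FiniteDimensional ℝ (V i))
    (hV : IsFDD V)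
    (S : ℕ → X →L[ℝ] X) (hS : IsPartialSumProj V S)
    (hbdd : ∃ K : ℝ, ∀ n, ‖S n‖ ≤ K)
    (H : Submodule ℝ X) [FiniteDimensional ℝ H]
    (k : ℕ) (hVH : ∀ i < k, V i ≤ H)
    (ε : ℝ) (hε : 0 < ε) :
    ∃ m : ℕ, k ≤ m ∧ ∃ A : X →ₗ[ℝ] X,
      -- (1) `A` is a small perturbation of the identity on `Y = V k + ⋯ + V m`
      (∀ y ∈ ⨆ i ∈ Finset.Icc k m, V i, ‖A y - y‖ ≤ ε * ‖y‖) ∧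
      -- (2) `A(Y) ⊆ span((V 0 + ⋯ + V m) ∪ H)`
      (Submodule.map A (⨆ i ∈ Finset.Icc k m, V i) ≤ (⨆ i ∈ Finset.Iic m, V i) ⊔ H) ∧
      -- (3) `H ⊆ V 0 + ⋯ + V (k-1) + A(Y)`
      (H ≤ (⨆ i ∈ Finset.Iio k, V i) ⊔ Submodule.map A (⨆ i ∈ Finset.Icc k m, V i)) ∧
      -- moreover `A` is the identity on `V 0 + ⋯ + V (k-1)`
      (∀ x ∈ ⨆ i ∈ Finset.Iio k, V i, A x = x) :=
  blocking_lemma_general X V hV S hS H k hVH ε hε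
end
end

section
/- Let X be a Banach space over ℝ, and let (Z_n)_{n=1}^∞ and (X_n)_{n=1}^∞ be sequences of subspaces of X with Z_n ⊆ X_n ⊆ Z_{n+1} for all n. Let R_n : X → X be continuous linear projections with range Z_n satisfying R_i R_j = R_{min(i,j)} for all i, j, and let Q_n : X → X be continuous linear projections with range X_n. Define P_n := R_n + (I − R_n) Q_n (R_{n+1} − R_n). Then each P_n is a continuous linear projection of X onto X_n (i.e., P_n ∘ P_n = P_n, the range of P_n is X_n, and P_n x = x for x ∈ X_n), and P_n P_{n+1} = P_n for every n. Moreover, if sup_n ‖R_n‖ < ∞ and sup_n ‖Q_n‖ < ∞ then sup_n ‖P_n‖ < ∞. -/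
/-!
Write `P = R + (I - R) Q (R' - R)` with `R = R_n`, `R' = R_{n+1}`, `Q = Q_n`. Every term of `P x`
lies in `X_n ⊇ Z_n`. For `x ∈ X_n ⊆ Z_{n+1}` we have `R' x = x`, and `x - R x ∈ X_n` is fixed by
`Q`, so `P x = R x + (I - R)(x - R x) = x`. The identity `P_n P_{n+1} = P_n` is ring algebra:
`P_n R_{n+1} = P_n` because `R_n R_{n+1} = R_n`, and `R_{n+1} P_{n+1} = R_{n+1}` because
`R_{n+1} (I - R_{n+1}) = 0`. The norm bound is the triangle inequality.
-/

open LinearMap (IsProj)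

section Ring

variable {S : Type*} [Ring S]

def intermediateProjection (a b q : S) : S :=
  a + (1 - a) * q * (b - a)

theorem mul_intermediateProjection {a : S} (ha : IsIdempotentElem a) (b q : S) :
    a * intermediateProjection a b q = a := by
  rw [intermediateProjection, mul_add, ← mul_assoc, ← mul_assoc, mul_one_sub, ha.eq, sub_self,
    zero_mul, zero_mul, add_zero]

theorem intermediateProjection_mul_right {a b : S} (hab : a * b = a) (hb : IsIdempotentElem b)
    (q : S) : intermediateProjection a b q * b = intermediateProjection a b q := by
  rw [intermediateProjection, add_mul, hab, mul_assoc _ (b - a), sub_mul b, hb.eq, hab]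

theorem intermediateProjection_mul_intermediateProjection {a b : S} (hab : a * b = a)
    (hb : IsIdempotentElem b) (q c q' : S) :
    intermediateProjection a b q * intermediateProjection b c q' = intermediateProjection a b q :=
  calc intermediateProjection a b q * intermediateProjection b c q'
      = intermediateProjection a b q * (b * intermediateProjection b c q') := by
        rw [← mul_assoc, intermediateProjection_mul_right hab hb]
    _ = intermediateProjection a b q := by
        rw [mul_intermediateProjection hb, intermediateProjection_mul_right hab hb]

end Ring

theorem norm_intermediateProjection_le {S : Type*} [SeminormedRing S] (a b q : S) :
    ‖intermediateProjection a b q‖ ≤ ‖a‖ + (‖(1 : S)‖ + ‖a‖) * ‖q‖ * (‖b‖ + ‖a‖) :=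
  calc ‖intermediateProjection a b q‖
      ≤ ‖a‖ + ‖(1 - a) * q‖ * ‖b - a‖ :=
        (norm_add_le _ _).trans (by gcongr; exact norm_mul_le _ _)
    _ ≤ ‖a‖ + ‖1 - a‖ * ‖q‖ * ‖b - a‖ := by gcongr; exact norm_mul_le _ _
    _ ≤ ‖a‖ + (‖(1 : S)‖ + ‖a‖) * ‖q‖ * (‖b‖ + ‖a‖) := by
        gcongr <;> exact norm_sub_le _ _

namespace ContinuousLinearMap

variable {S M : Type*} [Ring S] [AddCommGroup M] [Module S M] [TopologicalSpace M]

theorem isProj_of_range_eq {f : M →L[S] M} {m : Submodule S M} (hf : IsIdempotentElem f)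
    (hrange : LinearMap.range (f : M →ₗ[S] M) = m) : IsProj m f := by
  have h := LinearMap.IsIdempotentElem.isProj_range _ (isIdempotentElem_toLinearMap_iff.mpr hf)
  rw [hrange] at h
  exact ⟨h.map_mem, h.map_id⟩

theorem isIdempotentElem_of_isProj {f : M →L[S] M} {m : Submodule S M} (h : IsProj m f) :
    IsIdempotentElem f :=
  ext fun x => h.map_id (f x) (h.map_mem x)

theorem range_toLinearMap_of_isProj {f : M →L[S] M} {m : Submodule S M} (h : IsProj m f) :
    LinearMap.range (f : M →ₗ[S] M) = m :=
  LinearMap.IsProj.range (f := (f : M →ₗ[S] M)) ⟨h.map_mem, h.map_id⟩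

section

variable [IsTopologicalAddGroup M]

theorem intermediateProjection_apply (a b q : M →L[S] M) (x : M) :
    intermediateProjection a b q x = a x + (q (b x - a x) - a (q (b x - a x))) := by
  simp [intermediateProjection]

theorem isProj_intermediateProjection {Z W Z' : Submodule S M} {a b q : M →L[S] M}
    (ha : IsProj Z a) (hb : IsProj Z' b) (hq : IsProj W q) (hZW : Z ≤ W) (hWZ' : W ≤ Z') :
    IsProj W (intermediateProjection a b q) where
  map_mem x := by
    rw [intermediateProjection_apply]
    exact add_mem (hZW (ha.map_mem x)) (sub_mem (hq.map_mem _) (hZW (ha.map_mem _)))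
  map_id x hx := by
    have hx_sub : x - a x ∈ W := sub_mem hx (hZW (ha.map_mem x))
    rw [intermediateProjection_apply, hb.map_id x (hWZ' hx), hq.map_id _ hx_sub, map_sub,
      ha.map_id _ (ha.map_mem x)]
    abel

end

end ContinuousLinearMap

open ContinuousLinearMap in
theorem projections_onto_intermediate_subspaces_general
    (X : Type*) [NormedAddCommGroup X] [NormedSpace ℝ X]
    (Z W : ℕ → Submodule ℝ X)
    (hZW : ∀ n, Z n ≤ W n) (hWZ : ∀ n, W n ≤ Z (n + 1))
    (R : ℕ → X →L[ℝ] X)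
    (hRrange : ∀ n, LinearMap.range (R n : X →ₗ[ℝ] X) = Z n)
    (hRcomm : ∀ i j, (R i).comp (R j) = R (min i j))
    (Q : ℕ → X →L[ℝ] X)
    (hQproj : ∀ n, (Q n).comp (Q n) = Q n)
    (hQrange : ∀ n, LinearMap.range (Q n : X →ₗ[ℝ] X) = W n)
    (P : ℕ → X →L[ℝ] X)
    (hP : ∀ n, P n = R n + ((1 : X →L[ℝ] X) - R n) * Q n * (R (n + 1) - R n)) :
    (∀ n, (P n).comp (P n) = P n) ∧
    (∀ n, LinearMap.range (P n : X →ₗ[ℝ] X) = W n) ∧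
    (∀ n, ∀ x ∈ W n, P n x = x) ∧
    (∀ n, (P n).comp (P (n + 1)) = P n) ∧
    (∀ CR CQ : ℝ, (∀ n, ‖R n‖ ≤ CR) → (∀ n, ‖Q n‖ ≤ CQ) →
      ∃ C : ℝ, ∀ n, ‖P n‖ ≤ C) := by
  have hP_eq n : P n = intermediateProjection (R n) (R (n + 1)) (Q n) := hP n
  have hRidem n : IsIdempotentElem (R n) := (hRcomm n n).trans (congrArg R (min_self n))
  have hRR n : R n * R (n + 1) = R n :=
    (hRcomm n (n + 1)).trans (congrArg R (min_eq_left n.le_succ))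
  have hPproj n : IsProj (W n) (P n) := hP_eq n ▸ isProj_intermediateProjection
    (isProj_of_range_eq (hRidem n) (hRrange n)) (isProj_of_range_eq (hRidem _) (hRrange _))
    (isProj_of_range_eq (hQproj n) (hQrange n)) (hZW n) (hWZ n)
  refine ⟨fun n => isIdempotentElem_of_isProj (hPproj n),
    fun n => range_toLinearMap_of_isProj (hPproj n), fun n => (hPproj n).map_id,
    fun n => ?_, fun CR CQ hCR hCQ => ?_⟩
  · rw [hP_eq, hP_eq]
    exact intermediateProjection_mul_intermediateProjection (hRR n) (hRidem _) _ _ _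
  · have hCR0 : 0 ≤ CR := (norm_nonneg _).trans (hCR 0)
    have hCQ0 : 0 ≤ CQ := (norm_nonneg _).trans (hCQ 0)
    refine ⟨CR + (1 + CR) * CQ * (CR + CR), fun n => ?_⟩
    rw [hP_eq]
    refine (norm_intermediateProjection_le _ _ _).trans ?_
    gcongr
    exacts [hCR n, norm_id_le, hCR n, hCQ n, hCR _, hCR n]

theorem projections_onto_intermediate_subspaces
    (X : Type*) [NormedAddCommGroup X] [NormedSpace ℝ X] [CompleteSpace X]
    (Z W : ℕ → Submodule ℝ X)
    (hZW : ∀ n, Z n ≤ W n) (hWZ : ∀ n, W n ≤ Z (n + 1))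
    (R : ℕ → X →L[ℝ] X)
    (hRrange : ∀ n, LinearMap.range (R n : X →ₗ[ℝ] X) = Z n)
    (hRcomm : ∀ i j, (R i).comp (R j) = R (min i j))
    (Q : ℕ → X →L[ℝ] X)
    (hQproj : ∀ n, (Q n).comp (Q n) = Q n)
    (hQrange : ∀ n, LinearMap.range (Q n : X →ₗ[ℝ] X) = W n)
    (P : ℕ → X →L[ℝ] X)
    (hP : ∀ n, P n = R n + ((1 : X →L[ℝ] X) - R n) * Q n * (R (n + 1) - R n)) :
    (∀ n, (P n).comp (P n) = P n) ∧
    (∀ n, LinearMap.range (P n : X →ₗ[ℝ] X) = W n) ∧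
    (∀ n, ∀ x ∈ W n, P n x = x) ∧
    (∀ n, (P n).comp (P (n + 1)) = P n) ∧
    (∀ CR CQ : ℝ, (∀ n, ‖R n‖ ≤ CR) → (∀ n, ‖Q n‖ ≤ CQ) →
      ∃ C : ℝ, ∀ n, ‖P n‖ ≤ C) :=
  projections_onto_intermediate_subspaces_general X Z W hZW hWZ R hRrange hRcomm Q hQproj hQrange P
    hP
end

section
/- Let X₁ ⊆ X₂ ⊆ X₃ be Banach spaces over ℝ with X₁ and X₂ finite-dimensional, and let P : X₃ → X₁ be a continuous linear projection onto X₁ (a continuous linear map with range X₁ whose restriction to X₁ is the identity). Then P has a factorization P = P₁ ∘ P₂, where P₂ : X₃ → X₂ is a continuous linear projection onto X₂ and P₁ : X₂ → X₁ is a continuous linear projection onto X₁. (One can take ker P₁ = ker P ∩ X₂ and ker P₂ to be a complement of ker P₁ in ker P.) -/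
/-- Every continuous linear projection `P : X₃ → X₁` factors as `P = P₁ ∘ P₂` through
a continuous linear projection `P₂ : X₃ → X₂` and a projection `P₁ : X₂ → X₁`. -/
theorem projection_factorization
    (X₃ : Type*) [NormedAddCommGroup X₃] [NormedSpace ℝ X₃] [CompleteSpace X₃]
    (X₁ X₂ : Submodule ℝ X₃) (h12 : X₁ ≤ X₂)
    [FiniteDimensional ℝ X₁] [FiniteDimensional ℝ X₂]
    (P : X₃ →L[ℝ] X₁) (hP : ∀ x : X₁, P (x : X₃) = x) :
    ∃ (P₂ : X₃ →L[ℝ] X₂) (P₁ : (X₂ : Submodule ℝ X₃) →L[ℝ] X₁),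
      (∀ x : X₂, P₂ (x : X₃) = x) ∧
      (∀ x : X₁, P₁ (Submodule.inclusion h12 x) = x) ∧
      (∀ x : X₃, P x = P₁ (P₂ x)) := by
  obtain ⟨Q, hQ⟩ := Submodule.ClosedComplemented.of_finiteDimensional X₂
  -- inclusion maps
  set j : X₁ →L[ℝ] X₂ := (Submodule.inclusion h12).toContinuousLinearMap
  set ι : X₂ →L[ℝ] X₃ := X₂.subtypeL
  set P₁ : X₂ →L[ℝ] X₁ := P.comp ι
  set P₂ : X₃ →L[ℝ] X₂ := Q + j.comp P - (j.comp P₁).comp Q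
  have hx1 : ∀ y : X₁, ((j y : X₂) : X₃) = (y : X₃) := fun y => rfl
  refine ⟨P₂, P₁, ?_, ?_, ?_⟩
  · intro x
    have : P₂ (x : X₃) = Q x + j (P x) - j (P₁ (Q x)) := rfl
    rw [this, hQ x]
    simp [P₁, ι]
  · intro x
    show P ((Submodule.inclusion h12 x : X₂) : X₃) = x
    exact hP x
  · intro x
    have : P₂ x = Q x + j (P x) - j (P₁ (Q x)) := rfl
    have h2 : P₁ (P₂ x) = P ((P₂ x : X₂) : X₃) := rfl
    rw [h2, this]
    push_cast
    rw [hx1, hx1]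
    rw [map_sub, map_add, hP, hP]
    simp [P₁, ι]
end

section
/- Let X and Y be finite-dimensional normed spaces over ℝ, and endow the direct sum X ⊕ Y with a norm ‖·‖ satisfying ‖x‖ ≤ ‖(x,y)‖ and ‖y‖ ≤ ‖(x,y)‖ for all (x,y) ∈ X ⊕ Y. Let A_X be a sufficient enlargement for X and A_Y a sufficient enlargement for Y. Then the Minkowski sum A_X + A_Y = {(x, y) : x ∈ A_X, y ∈ A_Y} ⊆ X ⊕ Y is a sufficient enlargement for (X ⊕ Y, ‖·‖). -/
/-!
By Hahn–Banach, `ℓ∞` is an injective space: a contraction from a subspace of a normed space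
into `ℓ∞` extends coordinatewise to the whole space without increasing its norm. Embedding `X`
isometrically into `ℓ∞` (via a dense sequence of the dual unit ball) and composing with the
projection granted by a sufficient enlargement `A` of `X`, every contraction from a subspace of
`W` into `X` extends to an operator on `W` mapping the unit ball into `A`. The coordinate
projections of `Z ≅ X × Y` are contractions because the norm of `Z` dominates the coordinate
norms; extending both and recombining them through `e` gives a retraction of `W` onto `i(Z)`
mapping the unit ball into `e(AX × AY)`.
-/

open Metric
open scoped ENNReal

noncomputable section

universe u

/-- A bounded, closed, convex, symmetric subset `A` of a finite-dimensional normed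
space `X` is a sufficient enlargement for `X` if for every Banach space `Y` and every
linear isometric embedding `i : X → Y` there is a continuous linear projection of `Y`
onto `i(X)` mapping the closed unit ball of `Y` into `i(A)`. -/
def IsSufficientEnlargement {X : Type*} [NormedAddCommGroup X] [NormedSpace ℝ X]
    [FiniteDimensional ℝ X] (A : Set X) : Prop :=
  Bornology.IsBounded A ∧ IsClosed A ∧ Convex ℝ A ∧ A = -A ∧
  ∀ (Y : Type u) [NormedAddCommGroup Y] [NormedSpace ℝ Y] [CompleteSpace Y]
    (i : X →ₗᵢ[ℝ] Y),
    ∃ P : Y →L[ℝ] Y,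
      (∀ x : X, P (i x) = i x) ∧
      LinearMap.range (P : Y →ₗ[ℝ] Y) = LinearMap.range i.toLinearMap ∧
      P '' closedBall 0 1 ⊆ i '' A

open TopologicalSpace
open scoped NNReal

section LpInfty

variable {ι W : Type*} [NormedAddCommGroup W] [NormedSpace ℝ W]

def ContinuousLinearMap.toLpInfty (F : ι → StrongDual ℝ W) (C : ℝ≥0) (hF : ∀ i, ‖F i‖ ≤ C) :
    W →L[ℝ] lp (fun _ : ι => ℝ) ∞ :=
  LinearMap.mkContinuous
    { toFun w := ⟨fun i => F i w, memℓp_infty ⟨C * ‖w‖, by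
        rintro _ ⟨i, rfl⟩
        exact (F i).le_of_opNorm_le (hF i) w⟩⟩
      map_add' _ _ := by ext i; exact (F i).map_add _ _
      map_smul' _ _ := by ext i; exact (F i).map_smul _ _ }
    C fun w => lp.norm_le_of_forall_le (by positivity) fun i => (F i).le_of_opNorm_le (hF i) w

@[simp]
theorem ContinuousLinearMap.toLpInfty_apply (F : ι → StrongDual ℝ W) (C : ℝ≥0)
    (hF : ∀ i, ‖F i‖ ≤ C) (w : W) (i : ι) : toLpInfty F C hF w i = F i w :=
  rfl

theorem ContinuousLinearMap.norm_toLpInfty_le (F : ι → StrongDual ℝ W) (C : ℝ≥0)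
    (hF : ∀ i, ‖F i‖ ≤ C) : ‖toLpInfty F C hF‖ ≤ C :=
  LinearMap.mkContinuous_norm_le _ C.2 _

theorem LinearIsometry.exists_extension_lpInfty {Z : Type*} [NormedAddCommGroup Z]
    [NormedSpace ℝ Z] (φ : Z →ₗᵢ[ℝ] W) (S : Z →L[ℝ] lp (fun _ : ι => ℝ) ∞) :
    ∃ T : W →L[ℝ] lp (fun _ : ι => ℝ) ∞, ‖T‖ ≤ ‖S‖ ∧ ∀ z, T (φ z) = S z := by
  have : Fact ((1 : ℝ≥0∞) ≤ ∞) := ⟨le_top⟩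
  let f : ι → StrongDual ℝ (LinearMap.range φ.toLinearMap) := fun i =>
    lp.evalCLM ℝ _ ∞ i ∘L S ∘L φ.equivRange.symm.toContinuousLinearEquiv.toContinuousLinearMap
  choose g hgf hg using fun i => exists_extension_norm_eq _ (f i)
  have hgS : ∀ i, ‖g i‖ ≤ ‖S‖₊ := fun i => (hg i).trans_le <|
    (f i).opNorm_le_bound (norm_nonneg _) fun v =>
      calc ‖f i v‖ ≤ ‖S (φ.equivRange.symm v)‖ := lp.norm_apply_le_norm ENNReal.top_ne_zero _ i
        _ ≤ ‖S‖ * ‖φ.equivRange.symm v‖ := S.le_opNorm _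
        _ = ‖S‖ * ‖v‖ := by rw [LinearIsometryEquiv.norm_map]
  refine ⟨ContinuousLinearMap.toLpInfty g ‖S‖₊ hgS, ContinuousLinearMap.norm_toLpInfty_le _ _ _,
    fun z => ?_⟩
  ext i
  have hφz : (φ.equivRange z : W) = φ z := rfl
  rw [ContinuousLinearMap.toLpInfty_apply, ← hφz, hgf]
  show S (φ.equivRange.symm (φ.equivRange z)) i = S z i
  rw [LinearIsometryEquiv.symm_apply_apply]

end LpInfty

theorem exists_linearIsometry_lpInfty (X : Type*) [NormedAddCommGroup X] [NormedSpace ℝ X]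
    [SeparableSpace (StrongDual ℝ X)] : Nonempty (X →ₗᵢ[ℝ] lp (fun _ : ℕ => ℝ) ∞) := by
  let B := closedBall (0 : StrongDual ℝ X) 1
  let g : ℕ → StrongDual ℝ X := fun n => denseSeq B n
  have hg : ∀ n, ‖g n‖ ≤ (1 : ℝ≥0) := fun n => mem_closedBall_zero_iff.1 (denseSeq B n).2
  let k := ContinuousLinearMap.toLpInfty g 1 hg
  refine ⟨⟨k.toLinearMap, fun x => le_antisymm ?_ ?_⟩⟩
  · simpa using k.le_of_opNorm_le (ContinuousLinearMap.norm_toLpInfty_le g 1 hg) x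
  · -- a norming functional `f` of `x` is a limit of the `g n`, and `f ↦ f x ≤ ‖k x‖` is closed
    obtain ⟨f, hf, hfx⟩ := exists_dual_vector'' ℝ x
    have := (denseRange_denseSeq B).induction_on
      (p := fun f => (f : StrongDual ℝ X) x ≤ ‖k x‖) ⟨f, mem_closedBall_zero_iff.2 hf⟩
      (isClosed_le ((ContinuousLinearMap.apply ℝ ℝ x).continuous.comp continuous_subtype_val)
        continuous_const)
      fun n => (le_abs_self _).trans (lp.norm_apply_le_norm ENNReal.top_ne_zero (k x) n)
    simpa [hfx] using this

section Enlargement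

variable {X : Type*} [NormedAddCommGroup X] [NormedSpace ℝ X] [FiniteDimensional ℝ X]
  {A : Set X}

theorem IsSufficientEnlargement.isCompact (hA : IsSufficientEnlargement A) : IsCompact A :=
  isCompact_of_isClosed_isBounded hA.2.1 hA.1

theorem IsSufficientEnlargement.exists_retraction (hA : IsSufficientEnlargement.{u} A)
    {E : Type u} [NormedAddCommGroup E] [NormedSpace ℝ E] [CompleteSpace E] (k : X →ₗᵢ[ℝ] E) :
    ∃ R : E →L[ℝ] X, (∀ x, R (k x) = x) ∧ ∀ y, ‖y‖ ≤ 1 → R y ∈ A := by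
  obtain ⟨P, hPk, hPrange, hPA⟩ := hA.2.2.2.2 E k
  have hP : ∀ y, P y ∈ LinearMap.range k.toLinearMap := fun y => hPrange ▸ ⟨y, rfl⟩
  let R := k.equivRange.symm.toContinuousLinearEquiv.toContinuousLinearMap ∘L P.codRestrict _ hP
  have hkR : ∀ y, k (R y) = P y := fun y =>
    congrArg Subtype.val (k.equivRange.apply_symm_apply ⟨P y, hP y⟩)
  refine ⟨R, fun x => k.injective (by rw [hkR, hPk]), fun y hy => ?_⟩
  obtain ⟨a, ha, hay⟩ := hPA ⟨y, mem_closedBall_zero_iff.2 hy, rfl⟩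
  rwa [← k.injective (hay.trans (hkR y).symm)]

theorem IsSufficientEnlargement.exists_extension (hA : IsSufficientEnlargement.{u} A)
    {Z W : Type*} [NormedAddCommGroup Z] [NormedSpace ℝ Z] [NormedAddCommGroup W]
    [NormedSpace ℝ W] (φ : Z →ₗᵢ[ℝ] W) (π : Z →L[ℝ] X) (hπ : ‖π‖ ≤ 1) :
    ∃ q : W →L[ℝ] X, (∀ z, q (φ z) = π z) ∧ ∀ w, ‖w‖ ≤ 1 → q w ∈ A := by
  obtain ⟨k⟩ := exists_linearIsometry_lpInfty X
  let up : lp (fun _ : ℕ => ℝ) ∞ ≃ₗᵢ[ℝ] ULift.{u} (lp (fun _ : ℕ => ℝ) ∞) :=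
    (LinearIsometryEquiv.ulift ℝ _).symm
  obtain ⟨R, hRk, hRA⟩ := hA.exists_retraction (up.toLinearIsometry.comp k)
  obtain ⟨T, hT, hTφ⟩ := φ.exists_extension_lpInfty (k.toContinuousLinearMap ∘L π)
  have hT1 : ‖T‖ ≤ 1 := hT.trans <| k.norm_toContinuousLinearMap_comp.trans_le hπ
  refine ⟨R ∘L up.toContinuousLinearEquiv.toContinuousLinearMap ∘L T, fun z => ?_,
    fun w hw => hRA _ ?_⟩
  · simpa [hTφ] using hRk (π z)
  · simpa using T.le_of_opNorm_le hT1 w |>.trans (by simpa using hw)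

end Enlargement

theorem exists_projection_of_retraction {Z W : Type*} [NormedAddCommGroup Z] [NormedSpace ℝ Z]
    [NormedAddCommGroup W] [NormedSpace ℝ W] (i : Z →ₗᵢ[ℝ] W) (R : W →L[ℝ] Z)
    (hR : ∀ z, R (i z) = z) {A : Set Z} (hRA : ∀ w, ‖w‖ ≤ 1 → R w ∈ A) :
    ∃ P : W →L[ℝ] W, (∀ z, P (i z) = i z) ∧
      LinearMap.range (P : W →ₗ[ℝ] W) = LinearMap.range i.toLinearMap ∧
      P '' closedBall 0 1 ⊆ i '' A := by
  refine ⟨i.toContinuousLinearMap ∘L R, fun z => by simp [hR], ?_, ?_⟩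
  · refine le_antisymm (LinearMap.range_comp_le_range _ _) ?_
    rintro _ ⟨z, rfl⟩
    exact ⟨i z, by simp [hR]⟩
  · rintro _ ⟨w, hw, rfl⟩
    exact ⟨R w, hRA w (mem_closedBall_zero_iff.1 hw), rfl⟩

/-- If `Z` carries a norm on the direct sum `X ⊕ Y` dominating both coordinate norms,
then the Minkowski sum of sufficient enlargements of `X` and of `Y` is a sufficient
enlargement of `Z`. -/
theorem minkowski_sum_sufficientEnlargement
    (X : Type*) [NormedAddCommGroup X] [NormedSpace ℝ X] [FiniteDimensional ℝ X]
    (Y : Type*) [NormedAddCommGroup Y] [NormedSpace ℝ Y] [FiniteDimensional ℝ Y]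
    (Z : Type*) [NormedAddCommGroup Z] [NormedSpace ℝ Z] [FiniteDimensional ℝ Z]
    (e : (X × Y) ≃ₗ[ℝ] Z)
    (h1 : ∀ (x : X) (y : Y), ‖x‖ ≤ ‖e (x, y)‖)
    (h2 : ∀ (x : X) (y : Y), ‖y‖ ≤ ‖e (x, y)‖)
    (AX : Set X) (hAX : IsSufficientEnlargement AX)
    (AY : Set Y) (hAY : IsSufficientEnlargement AY) :
    IsSufficientEnlargement (⇑e '' (AX ×ˢ AY)) := by
  let eC := e.toContinuousLinearEquiv
  have hcompact := (hAX.isCompact.prod hAY.isCompact).image eC.continuous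
  refine ⟨hcompact.isBounded, hcompact.isClosed,
    (hAX.2.2.1.prod hAY.2.2.1).linear_image e.toLinearMap, ?_, fun W _ _ _ i => ?_⟩
  · rw [← Set.image_neg_of_apply_neg_eq_neg fun _ _ => map_neg e _, Set.neg_prod,
      ← hAX.2.2.2.1, ← hAY.2.2.2.1]
  have hfst : ‖ContinuousLinearMap.fst ℝ X Y ∘L eC.symm.toContinuousLinearMap‖ ≤ 1 :=
    ContinuousLinearMap.opNorm_le_bound _ zero_le_one fun z => by
      simpa [eC] using h1 (e.symm z).1 (e.symm z).2
  have hsnd : ‖ContinuousLinearMap.snd ℝ X Y ∘L eC.symm.toContinuousLinearMap‖ ≤ 1 :=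
    ContinuousLinearMap.opNorm_le_bound _ zero_le_one fun z => by
      simpa [eC] using h2 (e.symm z).1 (e.symm z).2
  obtain ⟨q₁, hq₁, hq₁A⟩ := hAX.exists_extension i _ hfst
  obtain ⟨q₂, hq₂, hq₂A⟩ := hAY.exists_extension i _ hsnd
  exact exists_projection_of_retraction i (eC.toContinuousLinearMap ∘L q₁.prod q₂)
    (fun z => by simp [hq₁, hq₂]) fun w hw => ⟨_, ⟨hq₁A w hw, hq₂A w hw⟩, rfl⟩

end
end
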